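/- arXiv:1808.04424 — 8 statements merged into one kernel-verified Lean document; each statement's English description precedes it below -/
import Mathlib

section
/- Let V be a finite-dimensional complex vector space with direct sum decomposition V = V₁ ⊕ V₂. Let X, Y be endomorphisms of V with Y ≠ 0, such that Y(V₁) ⊆ V₁, Y(V₂) = 0, and XY = YX. Define X₁ : V₁ → V₁ as the composition of X restricted to V₁ with the projection onto V₁ along V₂. Then for every λ ∈ ℂ, Y maps the generalized eigenspace of X for eigenvalue λ into the generalized eigenspace of X₁ for eigenvalue λ. -/
/-! Since `V = V₁ ⊕ V₂` and `Y` kills `V₂`, the range of `Y` lies in `V₁`; as `X` commutes with `Y`,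
`X` preserves this range, so on it the compression `X₁` agrees with `X`. Thus the corestriction
`Y : V → V₁` intertwines `X` with `X₁`, hence `(X - λ)^j` with `(X₁ - λ)^j`, and it carries
generalized eigenvectors to generalized eigenvectors. -/

namespace Submodule

variable {R M : Type*} [Ring R] [AddCommGroup M] [Module R M] {p q : Submodule R M}

lemma apply_mem_of_codisjoint (hpq : Codisjoint p q) {f : M →ₗ[R] M}
    (hp : ∀ v ∈ p, f v ∈ p) (hq : ∀ v ∈ q, f v = 0) (u : M) : f u ∈ p := by
  obtain ⟨a, b, ha, hb, rfl⟩ := codisjoint_iff_exists_add_eq.mp hpq u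
  rw [map_add, hq b hb, add_zero]
  exact hp a ha

lemma comp_codRestrict_eq_of_commute (hpq : IsCompl p q) {X Y : M →ₗ[R] M}
    (hY : ∀ u, Y u ∈ p) (hcomm : X ∘ₗ Y = Y ∘ₗ X) {X₁ : p →ₗ[R] p}
    (hX₁ : ∀ v : p, X₁ v = p.projectionOnto q hpq (X v)) :
    X₁ ∘ₗ Y.codRestrict p hY = Y.codRestrict p hY ∘ₗ X := by
  ext u
  have hXY : X (Y u) = Y (X u) := LinearMap.congr_fun hcomm u
  simp only [LinearMap.comp_apply, LinearMap.codRestrict_apply, hX₁, hXY]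
  exact congrArg Subtype.val (projectionOnto_apply_left hpq ⟨Y (X u), hY (X u)⟩)

end Submodule

namespace Module.End

variable {R M N : Type*} [CommRing R] [AddCommGroup M] [Module R M] [AddCommGroup N] [Module R N]

lemma pow_sub_smul_apply_eq_zero_of_comp_eq {f : M →ₗ[R] N} {g : End R M} {g₂ : End R N}
    (h : g₂ ∘ₗ f = f ∘ₗ g) (μ : R) {j : ℕ} {v : M}
    (hv : ((g - μ • (LinearMap.id : End R M)) ^ j) v = 0) :
    ((g₂ - μ • (LinearMap.id : End R N)) ^ j) (f v) = 0 := by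
  have hμ : (g₂ - μ • LinearMap.id) ∘ₗ f = f ∘ₗ (g - μ • LinearMap.id) := by
    rw [LinearMap.sub_comp, LinearMap.comp_sub, h, LinearMap.smul_comp, LinearMap.comp_smul,
      LinearMap.id_comp, LinearMap.comp_id]
  rw [← LinearMap.comp_apply, commute_pow_left_of_commute hμ, LinearMap.comp_apply, hv, map_zero]

end Module.End

theorem stmt0_general (V : Type*) [AddCommGroup V] [Module ℂ V]
    (V₁ V₂ : Submodule ℂ V) (hcompl : IsCompl V₁ V₂)
    (X Y : V →ₗ[ℂ] V)
    (hY1 : ∀ v ∈ V₁, Y v ∈ V₁) (hY2 : ∀ v ∈ V₂, Y v = 0)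
    (hcomm : X ∘ₗ Y = Y ∘ₗ X)
    (X₁ : V₁ →ₗ[ℂ] V₁)
    (hX₁ : ∀ v : V₁, X₁ v = V₁.linearProjOfIsCompl V₂ hcompl (X v))
    (lam : ℂ) (v : V) (hv : ∃ j : ℕ, ((X - lam • (LinearMap.id : V →ₗ[ℂ] V)) ^ j) v = 0) :
    Y v ∈ V₁ ∧
      ∀ w : V₁, (w : V) = Y v → ∃ j : ℕ, ((X₁ - lam • (LinearMap.id : V₁ →ₗ[ℂ] V₁)) ^ j) w = 0 := by
  have hY : ∀ u, Y u ∈ V₁ := V₁.apply_mem_of_codisjoint hcompl.codisjoint hY1 hY2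
  refine ⟨hY v, fun w hw => ?_⟩
  obtain ⟨j, hj⟩ := hv
  have hw' : w = Y.codRestrict V₁ hY v := Subtype.ext hw
  exact ⟨j, hw' ▸ Module.End.pow_sub_smul_apply_eq_zero_of_comp_eq
    (V₁.comp_codRestrict_eq_of_commute hcompl hY hcomm hX₁) lam hj⟩

/-- Let `V = V₁ ⊕ V₂` be a finite-dimensional complex vector space, `X Y : V →ₗ V` with
`Y ≠ 0`, `Y(V₁) ⊆ V₁`, `Y(V₂) = 0` and `[X, Y] = 0`.  Let `X₁ : V₁ → V₁` be the compression
of `X` to `V₁` (projection along `V₂` composed with `X|_{V₁}`).  Then for every `λ ∈ ℂ`,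
`Y` maps the generalized `λ`-eigenspace of `X` into the generalized `λ`-eigenspace of `X₁`. -/
theorem stmt0 (V : Type*) [AddCommGroup V] [Module ℂ V] [FiniteDimensional ℂ V]
    (V₁ V₂ : Submodule ℂ V) (hcompl : IsCompl V₁ V₂)
    (X Y : V →ₗ[ℂ] V) (hY : Y ≠ 0)
    (hY1 : ∀ v ∈ V₁, Y v ∈ V₁) (hY2 : ∀ v ∈ V₂, Y v = 0)
    (hcomm : X ∘ₗ Y = Y ∘ₗ X)
    (X₁ : V₁ →ₗ[ℂ] V₁)
    (hX₁ : ∀ v : V₁, X₁ v = V₁.linearProjOfIsCompl V₂ hcompl (X v))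
    (lam : ℂ) (v : V) (hv : ∃ j : ℕ, ((X - lam • (LinearMap.id : V →ₗ[ℂ] V)) ^ j) v = 0) :
    Y v ∈ V₁ ∧
      ∀ w : V₁, (w : V) = Y v → ∃ j : ℕ, ((X₁ - lam • (LinearMap.id : V₁ →ₗ[ℂ] V₁)) ^ j) w = 0 :=
  stmt0_general V V₁ V₂ hcompl X Y hY1 hY2 hcomm X₁ hX₁ lam v hv
end

section
/- Let M be a connected complex reductive algebraic group with Lie algebra m, and let H ⊆ M be a reductive subgroup with Lie algebra h. Fix a nondegenerate symmetric M-invariant bilinear form on m and let h^⊥ be the annihilator of h. Then for every x ∈ h^⊥, 2·dim(Ad(H)·x) ≤ dim(Ad(M)·x). -/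
/-!
For `x ∈ h^⊥` the form `ω(a, b) = B(⁅x, a⁆, b) = B(x, ⁅a, b⁆)` on `m` is skew, with radical the
centralizer `z_m(x)`, and `h` is `ω`-isotropic since `B(x, ⁅a, b⁆) = 0` for `a, b ∈ h`. An isotropic
subspace of the symplectic space `m / z_m(x)` has at most half its dimension, and the image of `h`
there has dimension `dim h - dim z_h(x)`.
-/

open Module

namespace LinearMap.BilinForm

variable {K V : Type*} [Field K] [AddCommGroup V] [Module K V] [FiniteDimensional K V]

theorem two_mul_finrank_sub_finrank_inf_ker_le {B : LinearMap.BilinForm K V} (hB : B.IsRefl)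
    {W : Submodule K V} (hW : W ≤ B.orthogonal W) :
    2 * (finrank K W - finrank K ↥(W ⊓ LinearMap.ker B)) ≤
      finrank K V - finrank K (LinearMap.ker B) := by
  have hsup : W ⊔ LinearMap.ker B ≤ B.orthogonal W :=
    sup_le hW fun v hv w _ => hB v w (by simp [LinearMap.mem_ker.mp hv])
  have hdim := finrank_add_finrank_orthogonal' (B := B) W
  have hmono := Submodule.finrank_mono hsup
  have hsupinf := Submodule.finrank_sup_add_finrank_inf_eq W (LinearMap.ker B)
  omega

end LinearMap.BilinForm

namespace LieAlgebra

variable {R L : Type*} [CommRing R] [LieRing L] [LieAlgebra R L] {B : LinearMap.BilinForm R L}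

theorem isRefl_comp_ad (hsymm : ∀ y z : L, B y z = B z y)
    (hinv : ∀ y z w : L, B ⁅y, z⁆ w = B y ⁅z, w⁆) (x : L) :
    (B ∘ₗ ad R L x).IsRefl := by
  intro a b h
  have hswap : B ⁅x, b⁆ a = -B ⁅x, a⁆ b := by
    rw [hsymm, ← hinv, ← lie_skew, map_neg, LinearMap.neg_apply]
  simp only [LinearMap.comp_apply, ad_apply] at h ⊢
  rw [hswap, h, neg_zero]

theorem le_orthogonal_comp_ad (hsymm : ∀ y z : L, B y z = B z y)
    (hinv : ∀ y z w : L, B ⁅y, z⁆ w = B y ⁅z, w⁆) (H : LieSubalgebra R L) {x : L}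
    (hx : ∀ z ∈ H, B z x = 0) :
    H.toSubmodule ≤ LinearMap.BilinForm.orthogonal (B ∘ₗ ad R L x) H.toSubmodule := by
  intro b hb a ha
  change B ⁅x, a⁆ b = 0
  rw [hinv, hsymm]
  exact hx _ (H.lie_mem ha hb)

theorem span_setOf_lie_eq_zero_eq_ker (x : L) :
    Submodule.span R {z : L | ⁅z, x⁆ = 0} = LinearMap.ker (ad R L x) := by
  rw [← Submodule.span_eq (LinearMap.ker (ad R L x))]
  congr 1
  ext z
  simp only [Set.mem_ofPred_eq, SetLike.mem_coe, LinearMap.mem_ker, ad_apply]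
  rw [← lie_skew, neg_eq_zero]

theorem span_setOf_mem_and_lie_eq_zero_eq_inf_ker (H : LieSubalgebra R L) (x : L) :
    Submodule.span R {z : L | z ∈ H ∧ ⁅z, x⁆ = 0} =
      H.toSubmodule ⊓ LinearMap.ker (ad R L x) := by
  rw [← Submodule.span_eq (H.toSubmodule ⊓ LinearMap.ker (ad R L x))]
  congr 1
  ext z
  simp only [Set.mem_ofPred_eq, SetLike.mem_coe, Submodule.mem_inf, LinearMap.mem_ker, ad_apply,
    LieSubalgebra.mem_toSubmodule]
  rw [← lie_skew, neg_eq_zero]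

end LieAlgebra

theorem stmt5_general (L : Type*) [LieRing L] [LieAlgebra ℂ L] [Module.Finite ℂ L]
    (B : LinearMap.BilinForm ℂ L)
    (hsymm : ∀ x y : L, B x y = B y x)
    (hinv : ∀ x y z : L, B ⁅x, y⁆ z = B x ⁅y, z⁆)
    (hnd : ∀ x : L, (∀ y : L, B x y = 0) → x = 0)
    (H : LieSubalgebra ℂ L)
    (x : L) (hx : ∀ z ∈ H, B z x = 0) :
    2 * (Module.finrank ℂ H -
        Module.finrank ℂ (Submodule.span ℂ {z : L | z ∈ H ∧ ⁅z, x⁆ = 0}))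
      ≤ Module.finrank ℂ L -
        Module.finrank ℂ (Submodule.span ℂ {z : L | ⁅z, x⁆ = 0}) := by
  have hker : LinearMap.ker (B ∘ₗ LieAlgebra.ad ℂ L x) = LinearMap.ker (LieAlgebra.ad ℂ L x) :=
    LinearMap.ker_comp_of_ker_eq_bot _ (LinearMap.separatingLeft_iff_ker_eq_bot.mp hnd)
  have key := LinearMap.BilinForm.two_mul_finrank_sub_finrank_inf_ker_le
    (LieAlgebra.isRefl_comp_ad hsymm hinv x) (LieAlgebra.le_orthogonal_comp_ad hsymm hinv H hx)
  rw [hker] at key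
  rwa [LieAlgebra.span_setOf_mem_and_lie_eq_zero_eq_inf_ker,
    LieAlgebra.span_setOf_lie_eq_zero_eq_ker]

/-- Panyushev's inequality: for a reductive pair `(M, H)` with Lie algebras `(L, H)` and a
nondegenerate symmetric invariant form `B` (restricting nondegenerately to `H`), and any
`x` in the annihilator `h^⊥` of `H`, one has `2·dim(Ad(H)·x) ≤ dim(Ad(M)·x)`, where the
orbit dimensions are `dim h - dim z_h(x)` and `dim m - dim z_m(x)` respectively. -/
theorem stmt5 (L : Type*) [LieRing L] [LieAlgebra ℂ L] [Module.Finite ℂ L]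
    (B : LinearMap.BilinForm ℂ L)
    (hsymm : ∀ x y : L, B x y = B y x)
    (hinv : ∀ x y z : L, B ⁅x, y⁆ z = B x ⁅y, z⁆)
    (hnd : ∀ x : L, (∀ y : L, B x y = 0) → x = 0)
    (H : LieSubalgebra ℂ L)
    (hndH : ∀ x ∈ H, (∀ y ∈ H, B x y = 0) → x = 0)
    (x : L) (hx : ∀ z ∈ H, B z x = 0) :
    2 * (Module.finrank ℂ H -
        Module.finrank ℂ (Submodule.span ℂ {z : L | z ∈ H ∧ ⁅z, x⁆ = 0}))
      ≤ Module.finrank ℂ L -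
        Module.finrank ℂ (Submodule.span ℂ {z : L | ⁅z, x⁆ = 0}) :=
  stmt5_general L B hsymm hinv hnd H x hx
end

section
/- Let g = so(n, ℂ), k = so(n−1, ℂ) embedded as the fixed points of the involution θ, and let x ∈ g be such that z_k(x_k) ∩ z_g(x) = 0, where x_k is the projection of x to k. Then x is a regular element of g and x_k is a regular element of k, i.e. dim z_g(x) = ⌊n/2⌋ and dim z_k(x_k) = ⌊(n−1)/2⌋. -/
/-!
Lower bound: every `y ∈ so(m)` has `dim z(y) ≥ ⌊m/2⌋`. When the Krylov matrix of `y` is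
invertible, `1, y, …, y^(m-1)` are independent and the odd powers lie in `z(y)`. The centralizer
is the kernel of a linear system whose entries are polynomial in `y`, and the Krylov determinant
is a nonzero polynomial (it is `1` at a path matrix). So each large minor of the system times
this determinant vanishes identically; hence the minor does, and the rank bound holds for
every `y`.

Upper bound: `W ↦ [x, W]_k : g → k` is surjective, since its adjoint for the trace form,
`Z ↦ [Z, x]`, is injective on `k`: a `Z ∈ k` commuting with `x` also commutes with `x_k`, so it
lies in `z_g(x) ∩ z_k(x_k) = 0`. The kernel of this map contains `z_g(x) ⊕ z_k(x_k)`, so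
`dim z_g(x) + dim z_k(x_k) ≤ dim g - dim k = n - 1 = ⌊n/2⌋ + ⌊(n-1)/2⌋`,
which forces both lower bounds to be equalities.
-/

open Matrix Module
open scoped Kronecker

section LinearAlgebra

variable {K : Type*} [Field K]

theorem Matrix.exists_linearIndependent_row_submatrix_of_le_rank {ρ ι : Type*} [Fintype ρ]
    [Fintype ι] (A : Matrix ρ ι K) {r : ℕ} (h : r ≤ A.rank) :
    ∃ f : Fin r → ρ, LinearIndependent K (A.submatrix f id).row := by
  obtain ⟨κ, a, ha, hspan, hli⟩ := exists_linearIndependent' K A.row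
  have : Fintype κ := Fintype.ofInjective a ha
  rw [rank_eq_finrank_span_row, ← hspan, finrank_span_eq_card hli] at h
  obtain ⟨e⟩ := Function.Embedding.nonempty_of_card_le (α := Fin r) (β := κ) (by simpa using h)
  exact ⟨a ∘ e, hli.comp e e.injective⟩

theorem Matrix.exists_det_submatrix_ne_zero_of_le_rank {ρ ι : Type*} [Fintype ρ] [Fintype ι]
    (A : Matrix ρ ι K) {r : ℕ} (h : r ≤ A.rank) :
    ∃ (f : Fin r → ρ) (g : Fin r → ι), (A.submatrix f g).det ≠ 0 := by
  obtain ⟨f, hf⟩ := A.exists_linearIndependent_row_submatrix_of_le_rank h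
  have hrank : r ≤ (A.submatrix f id)ᵀ.rank := by rw [rank_transpose, hf.rank_matrix]; simp
  obtain ⟨g, hg⟩ := (A.submatrix f id)ᵀ.exists_linearIndependent_row_submatrix_of_le_rank hrank
  refine ⟨f, g, ?_⟩
  rw [← det_transpose, ← isUnit_iff_ne_zero, ← isUnit_iff_isUnit_det]
  exact linearIndependent_rows_iff_isUnit.1 hg

theorem Matrix.rank_map_eval_le_of_eval_ne_zero [Infinite K] {σ ρ ι : Type*} [Fintype ρ]
    [Fintype ι] (M : Matrix ρ ι (MvPolynomial σ K)) {D : MvPolynomial σ K} (hD : D ≠ 0)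
    {r : ℕ} (hgen : ∀ t, MvPolynomial.eval t D ≠ 0 → (M.map (MvPolynomial.eval t)).rank ≤ r)
    (t : σ → K) : (M.map (MvPolynomial.eval t)).rank ≤ r := by
  by_contra! hlt
  obtain ⟨f, g, hfg⟩ := (M.map (MvPolynomial.eval t)).exists_det_submatrix_ne_zero_of_le_rank hlt
  have heval : ∀ s, MvPolynomial.eval s (M.submatrix f g).det =
      ((M.map (MvPolynomial.eval s)).submatrix f g).det := fun s => by
    rw [RingHom.map_det, RingHom.mapMatrix_apply, submatrix_map]
  have hminor : (M.submatrix f g).det * D = 0 := by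
    refine MvPolynomial.funext fun s => ?_
    rw [map_mul, map_zero, heval, mul_eq_zero, or_iff_not_imp_right]
    intro hs
    by_contra hne
    have hle := (rank_of_det_ne_zero hne).symm.trans_le (rank_submatrix_le _ f g)
    rw [Fintype.card_fin] at hle
    exact absurd (hgen s hs) (by omega)
  exact hfg (by rw [← heval, (mul_eq_zero.1 hminor).resolve_right hD, map_zero])

theorem LinearMap.finrank_map_add_finrank_ker_inf {V W : Type*} [AddCommGroup V] [Module K V]
    [FiniteDimensional K V] [AddCommGroup W] [Module K W] (f : V →ₗ[K] W) (p : Submodule K V) :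
    finrank K (p.map f) + finrank K (LinearMap.ker f ⊓ p : Submodule K V) = finrank K p := by
  have := (f.domRestrict p).finrank_range_add_finrank_ker
  rwa [LinearMap.range_domRestrict, LinearMap.ker_domRestrict, ← Submodule.finrank_map_subtype_eq,
    Submodule.map_comap_subtype, inf_comm] at this

theorem LinearMap.surjective_of_injective_of_isAdjoint {V W : Type*} [AddCommGroup V]
    [Module K V] [AddCommGroup W] [Module K W] [FiniteDimensional K W]
    {BV : LinearMap.BilinForm K V} {BW : LinearMap.BilinForm K W} (hBV : BV.SeparatingLeft)
    (hBW : BW.Nondegenerate) {f : V →ₗ[K] W} {g : W →ₗ[K] V}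
    (hfg : ∀ v w, BW w (f v) = BV (g w) v) (hg : Function.Injective g) :
    Function.Surjective f := by
  rw [← LinearMap.range_eq_top]
  by_contra hf
  obtain ⟨φ, hφ, hφf⟩ := Submodule.exists_dual_map_eq_bot_of_lt_top (lt_top_iff_ne_top.2 hf)
    inferInstance
  set w := (BW.toDual hBW).symm φ
  have hgw : g w = 0 := hBV _ fun v => by
    rw [← hfg, LinearMap.BilinForm.apply_toDual_symm_apply]
    exact (Submodule.mem_bot K).1 (hφf ▸ Submodule.mem_map_of_mem (LinearMap.mem_range_self f v))
  have hφw : φ = BW.toDual hBW w := ((BW.toDual hBW).apply_symm_apply φ).symm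
  exact hφ (by rw [hφw, (injective_iff_map_eq_zero g).1 hg w hgw, map_zero])

end LinearAlgebra

namespace SkewBlock

variable {n : ℕ}

section Block

variable {R S : Type*} [CommRing R] [CommRing S]

def idBlock (n m : ℕ) : Matrix (Fin n) (Fin n) R := diagonal fun i => if (i : ℕ) < m then 1 else 0

def blockProj (m : ℕ) (C : Matrix (Fin n) (Fin n) R) : Matrix (Fin n) (Fin n) R :=
  idBlock n m * C * idBlock n m

variable {m : ℕ}

theorem idBlock_mul_idBlock : idBlock n m * idBlock n m = (idBlock n m : Matrix _ _ R) := by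
  rw [idBlock, diagonal_mul_diagonal]
  congr 1
  funext i
  split_ifs <;> simp

theorem blockProj_apply (C : Matrix (Fin n) (Fin n) R) (i j : Fin n) :
    blockProj m C i j = if (i : ℕ) < m ∧ (j : ℕ) < m then C i j else 0 := by
  simp only [blockProj, idBlock, diagonal_mul, mul_diagonal]
  split_ifs <;> simp_all

theorem blockProj_self (C : Matrix (Fin n) (Fin n) R) : blockProj n C = C := by
  ext i j
  simp [blockProj_apply]

theorem blockProj_pred_apply {last : Fin n} (hlast : (last : ℕ) = n - 1)
    (C : Matrix (Fin n) (Fin n) R) (i j : Fin n) :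
    blockProj (n - 1) C i j = if i = last ∨ j = last then 0 else C i j := by
  have hlt : ∀ k : Fin n, (k : ℕ) < n - 1 ↔ ¬k = last := fun k => by
    rw [Fin.ext_iff]
    omega
  simp only [blockProj_apply, hlt, ← not_or, ite_not]

theorem blockProj_pred_eq_iff {last : Fin n} (hlast : (last : ℕ) = n - 1)
    {Z : Matrix (Fin n) (Fin n) R} :
    blockProj (n - 1) Z = Z ↔ ∀ i, Z i last = 0 ∧ Z last i = 0 := by
  simp only [← Matrix.ext_iff, blockProj_pred_apply hlast]
  refine ⟨fun h i => ⟨by simpa using (h i last).symm, by simpa using (h last i).symm⟩,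
    fun h i j => ?_⟩
  split_ifs with hij
  · rcases hij with rfl | rfl
    exacts [(h j).2.symm, (h i).1.symm]
  · rfl

theorem transpose_blockProj (C : Matrix (Fin n) (Fin n) R) :
    (blockProj m C)ᵀ = blockProj m Cᵀ := by
  simp [blockProj, idBlock, Matrix.mul_assoc]

theorem blockProj_zero : blockProj m (0 : Matrix (Fin n) (Fin n) R) = 0 := by
  simp only [blockProj, Matrix.mul_zero, Matrix.zero_mul]

theorem blockProj_add (A B : Matrix (Fin n) (Fin n) R) :
    blockProj m (A + B) = blockProj m A + blockProj m B := by
  simp only [blockProj, Matrix.mul_add, Matrix.add_mul]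

theorem blockProj_neg (A : Matrix (Fin n) (Fin n) R) : blockProj m (-A) = -blockProj m A := by
  simp only [blockProj, Matrix.mul_neg, Matrix.neg_mul]

theorem blockProj_sub (A B : Matrix (Fin n) (Fin n) R) :
    blockProj m (A - B) = blockProj m A - blockProj m B := by
  simp only [blockProj, Matrix.mul_sub, Matrix.sub_mul]

theorem blockProj_smul (c : R) (A : Matrix (Fin n) (Fin n) R) :
    blockProj m (c • A) = c • blockProj m A := by
  simp only [blockProj, Matrix.mul_smul, Matrix.smul_mul]

theorem blockProj_map (f : R →+* S) (C : Matrix (Fin n) (Fin n) R) :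
    (blockProj m C).map f = blockProj m (C.map f) := by
  simp [blockProj, idBlock, Matrix.map_mul, diagonal_map, apply_ite f]

theorem blockProj_blockProj (C : Matrix (Fin n) (Fin n) R) :
    blockProj m (blockProj m C) = blockProj m C := by
  simp only [blockProj, ← Matrix.mul_assoc, idBlock_mul_idBlock]
  simp only [Matrix.mul_assoc, idBlock_mul_idBlock]

theorem idBlock_mul_of_blockProj_eq {Z : Matrix (Fin n) (Fin n) R} (hZ : blockProj m Z = Z) :
    idBlock n m * Z = Z := by
  rw [← hZ, blockProj, ← Matrix.mul_assoc, ← Matrix.mul_assoc, idBlock_mul_idBlock]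

theorem mul_idBlock_of_blockProj_eq {Z : Matrix (Fin n) (Fin n) R} (hZ : blockProj m Z = Z) :
    Z * idBlock n m = Z := by
  rw [← hZ, blockProj, Matrix.mul_assoc, idBlock_mul_idBlock]

theorem blockProj_mul_of_right {Z : Matrix (Fin n) (Fin n) R} (hZ : blockProj m Z = Z)
    (C : Matrix (Fin n) (Fin n) R) : blockProj m (C * Z) = blockProj m C * Z := by
  calc blockProj m (C * Z) = idBlock n m * C * (Z * idBlock n m) := by
        simp only [blockProj, Matrix.mul_assoc]
    _ = idBlock n m * C * (idBlock n m * Z) := by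
        rw [mul_idBlock_of_blockProj_eq hZ, idBlock_mul_of_blockProj_eq hZ]
    _ = blockProj m C * Z := by simp only [blockProj, Matrix.mul_assoc]

theorem blockProj_mul_of_left {Z : Matrix (Fin n) (Fin n) R} (hZ : blockProj m Z = Z)
    (C : Matrix (Fin n) (Fin n) R) : blockProj m (Z * C) = Z * blockProj m C := by
  calc blockProj m (Z * C) = (idBlock n m * Z) * C * idBlock n m := by
        simp only [blockProj, Matrix.mul_assoc]
    _ = (Z * idBlock n m) * C * idBlock n m := by
        rw [mul_idBlock_of_blockProj_eq hZ, idBlock_mul_of_blockProj_eq hZ]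
    _ = Z * blockProj m C := by simp only [blockProj, Matrix.mul_assoc]

theorem blockProj_pow_succ {y : Matrix (Fin n) (Fin n) R} (hy : blockProj m y = y) (k : ℕ) :
    blockProj m (y ^ (k + 1)) = y ^ (k + 1) := by
  rw [blockProj, pow_succ', ← Matrix.mul_assoc, idBlock_mul_of_blockProj_eq hy, ← pow_succ',
    pow_succ, Matrix.mul_assoc, mul_idBlock_of_blockProj_eq hy]

theorem trace_mul_blockProj {Z : Matrix (Fin n) (Fin n) R} (hZ : blockProj m Z = Z)
    (C : Matrix (Fin n) (Fin n) R) : trace (Z * blockProj m C) = trace (Z * C) := by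
  rw [← blockProj_mul_of_left hZ, blockProj, trace_mul_comm, ← Matrix.mul_assoc,
    idBlock_mul_idBlock, ← Matrix.mul_assoc, idBlock_mul_of_blockProj_eq hZ]

end Block

section SoBlock

variable (K : Type*) [Field K]

/-- `so(m)`, embedded in `n × n` matrices as the skew matrices supported on the top-left
`m × m` block; `g = soBlock K n n` and `k = soBlock K n (n - 1)`. -/
def soBlock (n m : ℕ) : Submodule K (Matrix (Fin n) (Fin n) K) where
  carrier := {Z | Zᵀ = -Z ∧ blockProj m Z = Z}
  add_mem' := by
    rintro A B ⟨hA, hA'⟩ ⟨hB, hB'⟩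
    exact ⟨by rw [transpose_add, hA, hB, neg_add], by rw [blockProj_add, hA', hB']⟩
  zero_mem' := ⟨by simp, blockProj_zero⟩
  smul_mem' := by
    rintro c A ⟨hA, hA'⟩
    exact ⟨by rw [transpose_smul, hA, smul_neg], by rw [blockProj_smul, hA']⟩

variable {K}

def soCentralizer (m : ℕ) (y : Matrix (Fin n) (Fin n) K) :
    Submodule K (Matrix (Fin n) (Fin n) K) :=
  soBlock K n m ⊓ (Subalgebra.centralizer K {y}).toSubmodule

variable {m : ℕ} {y Z : Matrix (Fin n) (Fin n) K}

theorem mem_soCentralizer :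
    Z ∈ soCentralizer m y ↔ Zᵀ = -Z ∧ blockProj m Z = Z ∧ Z * y = y * Z := by
  simp [soCentralizer, soBlock, Subalgebra.mem_centralizer_iff, eq_comm, and_assoc]

theorem soBlock_le_soBlock_self : soBlock K n m ≤ soBlock K n n :=
  fun _ hZ => ⟨hZ.1, blockProj_self _⟩

theorem blockProj_mem_soBlock {C : Matrix (Fin n) (Fin n) K} (hC : Cᵀ = -C) :
    blockProj m C ∈ soBlock K n m :=
  ⟨by rw [transpose_blockProj, hC, blockProj_neg], blockProj_blockProj C⟩

theorem blockProj_sub_transpose_mem_soBlock (A : Matrix (Fin n) (Fin n) K) :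
    blockProj m (A - Aᵀ) ∈ soBlock K n m :=
  blockProj_mem_soBlock (by rw [transpose_sub, transpose_transpose, neg_sub])

theorem blockProj_sub_transpose_half [CharZero K] (hy : y ∈ soBlock K n m) :
    blockProj m ((2⁻¹ : K) • y - ((2⁻¹ : K) • y)ᵀ) = y := by
  rw [transpose_smul, hy.1, smul_neg, sub_neg_eq_add, ← add_smul, ← two_mul,
    mul_inv_cancel₀ two_ne_zero, one_smul, hy.2]

theorem pow_odd_mem_soCentralizer (hy : y ∈ soBlock K n m) (k : ℕ) :
    y ^ (2 * k + 1) ∈ soCentralizer m y :=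
  mem_soCentralizer.2 ⟨by rw [transpose_pow, hy.1, Odd.neg_pow ⟨k, rfl⟩],
    blockProj_pow_succ hy.2 _, (Commute.self_pow y _).eq.symm⟩

end SoBlock

section CentralizerSystem

variable {R S : Type*} [CommRing R] [CommRing S] {m : ℕ}

/-- Acting on `vec Z`, the three row blocks compute `Z * y - y * Z`, `Z + Zᵀ` and
`Z - blockProj m Z`, so the kernel is `soCentralizer m y` while the entries are polynomial
in those of `y`. -/
def centralizerSystem (m : ℕ) (y : Matrix (Fin n) (Fin n) R) :
    Matrix ((Fin n × Fin n) ⊕ (Fin n × Fin n) ⊕ (Fin n × Fin n)) (Fin n × Fin n) R :=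
  fromRows (yᵀ ⊗ₖ 1 - 1 ⊗ₖ y)
    (fromRows (1 + (1 : Matrix _ _ R).submatrix Prod.swap id) (1 - idBlock n m ⊗ₖ idBlock n m))

theorem centralizerSystem_mulVec_vec (y Z : Matrix (Fin n) (Fin n) R) :
    centralizerSystem m y *ᵥ vec Z =
      Sum.elim (vec (Z * y - y * Z)) (Sum.elim (vec (Z + Zᵀ)) (vec (Z - blockProj m Z))) := by
  have hswap : (1 : Matrix (Fin n × Fin n) _ R).submatrix Prod.swap id *ᵥ vec Z = vec Zᵀ := by
    rw [← Equiv.coe_refl, submatrix_mulVec_equiv]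
    simp [vec_transpose]
  simp only [centralizerSystem, fromRows_mulVec, sub_mulVec, add_mulVec, one_mulVec,
    kronecker_mulVec_vec, hswap, vec_sub, vec_add, transpose_transpose, transpose_one,
    Matrix.one_mul, Matrix.mul_one, blockProj, idBlock, diagonal_transpose]

theorem centralizerSystem_map (f : R →+* S) (y : Matrix (Fin n) (Fin n) R) :
    (centralizerSystem m y).map f = centralizerSystem m (y.map f) := by
  ext (r | r | r) c <;>
    simp [centralizerSystem, one_apply, idBlock, diagonal_apply, apply_ite f]

variable {K : Type*} [Field K]

noncomputable def vecEquiv : Matrix (Fin n) (Fin n) K ≃ₗ[K] (Fin n × Fin n → K) :=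
  LinearEquiv.ofBijective ⟨⟨vec, vec_add⟩, vec_smul⟩ vec_bijective

theorem centralizerSystem_mulVec_vec_eq_zero_iff (y Z : Matrix (Fin n) (Fin n) K) :
    centralizerSystem m y *ᵥ vec Z = 0 ↔ Z ∈ soCentralizer m y := by
  rw [centralizerSystem_mulVec_vec, ← Sum.elim_zero_zero, ← Sum.elim_zero_zero, Sum.elim_eq_iff,
    Sum.elim_eq_iff, vec_eq_zero_iff, vec_eq_zero_iff, vec_eq_zero_iff, sub_eq_zero, sub_eq_zero,
    add_eq_zero_iff_eq_neg', mem_soCentralizer]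
  tauto

theorem finrank_soCentralizer_add_rank_centralizerSystem (y : Matrix (Fin n) (Fin n) K) :
    finrank K (soCentralizer m y) + (centralizerSystem m y).rank = n * n := by
  have hker : LinearMap.ker (centralizerSystem m y).mulVecLin =
      (soCentralizer m y).map (vecEquiv (n := n) (K := K)).toLinearMap := by
    ext v
    obtain ⟨Z, rfl⟩ := vec_bijective.2 v
    rw [LinearMap.mem_ker, mulVecLin_apply, centralizerSystem_mulVec_vec_eq_zero_iff,
      Submodule.mem_map_equiv, show vec Z = vecEquiv Z from rfl, LinearEquiv.symm_apply_apply]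
  rw [rank, ← LinearEquiv.finrank_map_eq vecEquiv, ← hker, add_comm,
    LinearMap.finrank_range_add_finrank_ker]
  simp

end CentralizerSystem

section Krylov

variable {R S : Type*} [CommRing R] [CommRing S] {m : ℕ}

def krylov (e : Fin m → Fin n) (a : Fin n) (A : Matrix (Fin n) (Fin n) R) :
    Matrix (Fin m) (Fin m) R :=
  of fun k j => (A ^ (j : ℕ)) a (e k)

theorem krylov_map (f : R →+* S) (e : Fin m → Fin n) (a : Fin n)
    (A : Matrix (Fin n) (Fin n) R) : (krylov e a A).map f = krylov e a (A.map f) := by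
  ext k j
  simp [krylov, ← Matrix.map_pow]

theorem linearIndependent_pow_of_det_krylov_ne_zero {K : Type*} [Field K] {e : Fin m → Fin n}
    {a : Fin n} {A : Matrix (Fin n) (Fin n) K} (h : (krylov e a A).det ≠ 0) :
    LinearIndependent K (fun j : Fin m => A ^ (j : ℕ)) := by
  rw [Fintype.linearIndependent_iff]
  intro c hc
  refine congrFun (eq_zero_of_mulVec_eq_zero h (funext fun k => ?_))
  have := congrFun (congrFun hc a) (e k)
  simp only [Matrix.sum_apply, Matrix.smul_apply, smul_eq_mul, Matrix.zero_apply] at this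
  simpa [mulVec, dotProduct, krylov, mul_comm] using this

def superdiag (n : ℕ) : Matrix (Fin n) (Fin n) R :=
  of fun i j => if (j : ℕ) = i + 1 then 1 else 0

def pathSkew (n m : ℕ) : Matrix (Fin n) (Fin n) R := blockProj m (superdiag n - (superdiag n)ᵀ)

theorem pathSkew_apply (a b : Fin n) :
    (pathSkew n m : Matrix (Fin n) (Fin n) R) a b = if (a : ℕ) < m ∧ (b : ℕ) < m then
      (if (b : ℕ) = a + 1 then 1 else 0) - (if (a : ℕ) = b + 1 then 1 else 0) else 0 := by
  simp only [pathSkew, blockProj_apply, superdiag, Matrix.sub_apply, transpose_apply, of_apply]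

theorem pow_pathSkew_apply_of_lt (j : ℕ) {a b : Fin n} (h : (a : ℕ) + j < b) :
    (pathSkew n m ^ j : Matrix (Fin n) (Fin n) R) a b = 0 := by
  induction j generalizing b with
  | zero => exact one_apply_ne (by rintro rfl; omega)
  | succ j ih =>
    rw [pow_succ, mul_apply]
    refine Finset.sum_eq_zero fun c _ => ?_
    by_cases hc : (a : ℕ) + j < c
    · rw [ih hc, zero_mul]
    · have h1 : (b : ℕ) ≠ c + 1 := by omega
      have h2 : (c : ℕ) ≠ b + 1 := by omega
      simp [pathSkew_apply, h1, h2]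

theorem pow_pathSkew_apply_of_eq (j : ℕ) {a b : Fin n} (h : (b : ℕ) = a + j)
    (hb : (b : ℕ) < m) : (pathSkew n m ^ j : Matrix (Fin n) (Fin n) R) a b = 1 := by
  induction j generalizing b with
  | zero => rw [pow_zero, show a = b from Fin.ext (by omega), one_apply_eq]
  | succ j ih =>
    let c : Fin n := ⟨a + j, by omega⟩
    have hc : (c : ℕ) = a + j := rfl
    rw [pow_succ, mul_apply, Finset.sum_eq_single c]
    · rw [ih hc (by omega), pathSkew_apply, if_pos ⟨by omega, hb⟩, if_pos (by omega),
        if_neg (by omega)]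
      simp
    · intro d _ hdc
      by_cases hd : (a : ℕ) + j < d
      · rw [pow_pathSkew_apply_of_lt j hd, zero_mul]
      · have h1 : (b : ℕ) ≠ d + 1 := fun h' => hdc (Fin.ext (by omega))
        have h2 : (d : ℕ) ≠ b + 1 := by omega
        simp [pathSkew_apply, h1, h2]
    · simp

theorem det_krylov_pathSkew (hm : m ≤ n) {a : Fin n} (ha : (a : ℕ) = 0) :
    (krylov (Fin.castLE hm) a (pathSkew n m : Matrix (Fin n) (Fin n) R)).det = 1 := by
  have htri : (krylov (Fin.castLE hm) a (pathSkew n m : Matrix (Fin n) (Fin n) R)).BlockTriangular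
      id := fun k j hjk => pow_pathSkew_apply_of_lt _ (by simpa [ha] using hjk)
  rw [det_of_isUpperTriangular htri]
  exact Finset.prod_eq_one fun k _ => pow_pathSkew_apply_of_eq _ (by simp [ha]) (by simp)

end Krylov

section LowerBound

variable {K : Type*} [Field K] {m : ℕ}

noncomputable def genericSkew (n m : ℕ) :
    Matrix (Fin n) (Fin n) (MvPolynomial (Fin n × Fin n) K) :=
  blockProj m (mvPolynomialX (Fin n) (Fin n) K - (mvPolynomialX (Fin n) (Fin n) K)ᵀ)

theorem genericSkew_map_eval (A : Matrix (Fin n) (Fin n) K) :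
    (genericSkew n m).map (MvPolynomial.eval fun p => A p.1 p.2) = blockProj m (A - Aᵀ) := by
  rw [genericSkew, blockProj_map, Matrix.map_sub _ (map_sub _), transpose_map,
    show (mvPolynomialX (Fin n) (Fin n) K).map (MvPolynomial.eval fun p => A p.1 p.2) = A from
      mvPolynomialX_map_eval₂ _ A]

theorem det_krylov_genericSkew_ne_zero (hm : m ≤ n) {a : Fin n} (ha : (a : ℕ) = 0) :
    (krylov (Fin.castLE hm) a (genericSkew n m : Matrix _ _ (MvPolynomial _ K))).det ≠ 0 := by
  intro h
  have := congrArg (MvPolynomial.eval fun p => superdiag n p.1 p.2) h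
  rw [RingHom.map_det, RingHom.mapMatrix_apply, krylov_map, genericSkew_map_eval,
    ← pathSkew, det_krylov_pathSkew hm ha, map_zero] at this
  exact one_ne_zero this

theorem half_le_finrank_soCentralizer_of_linearIndependent {y : Matrix (Fin n) (Fin n) K}
    (hy : y ∈ soBlock K n m) (hind : LinearIndependent K (fun j : Fin m => y ^ (j : ℕ))) :
    m / 2 ≤ finrank K (soCentralizer m y) := by
  let odd : Fin (m / 2) → Fin m := fun k => ⟨2 * k + 1, by omega⟩
  let v : Fin (m / 2) → soCentralizer m y := fun k => ⟨_, pow_odd_mem_soCentralizer hy k⟩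
  have hv : LinearIndependent K v := .of_comp (soCentralizer m y).subtype
    (hind.comp odd fun k l h => Fin.ext (by simpa [odd] using h))
  simpa using hv.fintype_card_le_finrank

theorem rank_centralizerSystem_le_of_det_krylov_ne_zero {e : Fin m → Fin n} {a : Fin n}
    {y : Matrix (Fin n) (Fin n) K} (hy : y ∈ soBlock K n m) (h : (krylov e a y).det ≠ 0) :
    (centralizerSystem m y).rank ≤ n * n - m / 2 := by
  have := half_le_finrank_soCentralizer_of_linearIndependent hy
    (linearIndependent_pow_of_det_krylov_ne_zero h)
  have := finrank_soCentralizer_add_rank_centralizerSystem (m := m) y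
  omega

theorem half_le_finrank_soCentralizer [CharZero K] (hm : m ≤ n) {y : Matrix (Fin n) (Fin n) K}
    (hy : y ∈ soBlock K n m) : m / 2 ≤ finrank K (soCentralizer m y) := by
  rcases Nat.eq_zero_or_pos m with rfl | hm0
  · simp
  let a : Fin n := ⟨0, by omega⟩
  have hsystem : ∀ A : Matrix (Fin n) (Fin n) K,
      (centralizerSystem m (genericSkew n m)).map (MvPolynomial.eval fun p => A p.1 p.2) =
        centralizerSystem m (blockProj m (A - Aᵀ)) := fun A => by
    rw [centralizerSystem_map, genericSkew_map_eval]
  have hrank := (centralizerSystem m (genericSkew n m)).rank_map_eval_le_of_eval_ne_zero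
    (det_krylov_genericSkew_ne_zero hm (a := a) rfl) (r := n * n - m / 2) (fun t ht => ?_)
    (fun p => ((2⁻¹ : K) • y) p.1 p.2)
  · rw [hsystem, blockProj_sub_transpose_half hy] at hrank
    have := finrank_soCentralizer_add_rank_centralizerSystem (m := m) y
    have : n ≤ n * n := Nat.le_mul_self n
    omega
  · let A : Matrix (Fin n) (Fin n) K := of fun i j => t (i, j)
    rw [show t = fun p => A p.1 p.2 from rfl, RingHom.map_det, RingHom.mapMatrix_apply,
      krylov_map, genericSkew_map_eval] at ht
    rw [show t = fun p => A p.1 p.2 from rfl, hsystem]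
    exact rank_centralizerSystem_le_of_det_krylov_ne_zero (blockProj_sub_transpose_mem_soBlock A) ht

end LowerBound

section UpperBound

variable {K : Type*} [Field K] {m : ℕ}

def traceForm (n : ℕ) : LinearMap.BilinForm K (Matrix (Fin n) (Fin n) K) :=
  (LinearMap.mul K _).compr₂ (traceLinearMap (Fin n) K K)

theorem single_sub_single_mem_soBlock {i j : Fin n} (hi : (i : ℕ) < m) (hj : (j : ℕ) < m) :
    single i j (1 : K) - single j i 1 ∈ soBlock K n m := by
  refine ⟨by rw [transpose_sub, transpose_single, transpose_single, neg_sub], ?_⟩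
  ext a b
  rw [blockProj_apply]
  split_ifs with hab
  · rfl
  · simp only [Matrix.sub_apply, single_apply]
    split_ifs <;> simp_all

theorem transpose_commutator {x W : Matrix (Fin n) (Fin n) K} (hx : xᵀ = -x) (hW : Wᵀ = -W) :
    (x * W - W * x)ᵀ = -(x * W - W * x) := by
  rw [transpose_sub, transpose_mul, transpose_mul, hx, hW, neg_sub, neg_mul_neg, neg_mul_neg]

def adProj (m : ℕ) (x : Matrix (Fin n) (Fin n) K) :
    Matrix (Fin n) (Fin n) K →ₗ[K] Matrix (Fin n) (Fin n) K where
  toFun W := blockProj m (x * W - W * x)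
  map_add' A B := by rw [Matrix.mul_add, Matrix.add_mul, add_sub_add_comm, blockProj_add]
  map_smul' c A := by
    rw [Matrix.mul_smul, Matrix.smul_mul, ← smul_sub, blockProj_smul, RingHom.id_apply]

theorem adProj_apply (x W : Matrix (Fin n) (Fin n) K) :
    adProj m x W = blockProj m (x * W - W * x) := rfl

variable [CharZero K]

theorem eq_zero_of_forall_trace_mul_eq_zero {C : Matrix (Fin n) (Fin n) K}
    (hC : C ∈ soBlock K n m) (h : ∀ W ∈ soBlock K n m, trace (C * W) = 0) : C = 0 := by
  rw [← hC.2]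
  ext i j
  rw [blockProj_apply]
  split_ifs with hij
  · have htr := h _ (single_sub_single_mem_soBlock hij.1 hij.2)
    have hskew : C j i = -C i j := by simpa using congrFun (congrFun hC.1 i) j
    rw [Matrix.mul_sub, trace_sub, trace_mul_single, trace_mul_single, hskew] at htr
    simp only [MulOpposite.op_one, one_smul] at htr
    have h2 : (2 : K) * C i j = 0 := by linear_combination -htr
    exact (mul_eq_zero.1 h2).resolve_left two_ne_zero
  · rfl

theorem separatingLeft_traceForm_restrict_soBlock :
    ((traceForm n).restrict (soBlock K n m)).SeparatingLeft := fun Z hZ =>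
  Subtype.ext (eq_zero_of_forall_trace_mul_eq_zero Z.2 fun W hW => hZ ⟨W, hW⟩)

theorem nondegenerate_traceForm_restrict_soBlock :
    ((traceForm n).restrict (soBlock K n m)).Nondegenerate :=
  ⟨separatingLeft_traceForm_restrict_soBlock, fun Z hZ =>
    separatingLeft_traceForm_restrict_soBlock Z fun W => by
      change trace (Z.1 * W.1) = 0
      rw [trace_mul_comm]
      exact hZ W⟩

theorem map_adProj_soBlock {x : Matrix (Fin n) (Fin n) K} (hx : xᵀ = -x)
    (hker : ∀ Z ∈ soBlock K n m, Z * x = x * Z → Z = 0) :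
    (soBlock K n n).map (adProj m x) = soBlock K n m := by
  have hmaps : ∀ W ∈ soBlock K n n, adProj m x W ∈ soBlock K n m := fun W hW =>
    blockProj_mem_soBlock (transpose_commutator hx hW.1)
  have hcomm : ∀ Z ∈ soBlock K n m, (LinearMap.mulRight K x - LinearMap.mulLeft K x) Z ∈
      soBlock K n n := fun Z hZ => by
    rw [LinearMap.sub_apply, LinearMap.mulRight_apply, LinearMap.mulLeft_apply]
    exact ⟨transpose_commutator hZ.1 hx, blockProj_self _⟩
  have hsurj : Function.Surjective ((adProj m x).restrict hmaps) := by
    refine LinearMap.surjective_of_injective_of_isAdjoint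
      (separatingLeft_traceForm_restrict_soBlock (K := K) (n := n) (m := n))
      (nondegenerate_traceForm_restrict_soBlock (K := K) (n := n) (m := m))
      (g := (LinearMap.mulRight K x - LinearMap.mulLeft K x).restrict hcomm) (fun W Z => ?_)
      ((injective_iff_map_eq_zero _).2 fun Z hZ => Subtype.ext (hker Z Z.2 ?_))
    · change trace (Z.1 * adProj m x W.1) = trace ((Z.1 * x - x * Z.1) * W.1)
      rw [adProj_apply, trace_mul_blockProj Z.2.2, Matrix.mul_sub, Matrix.sub_mul, trace_sub,
        trace_sub, Matrix.mul_assoc, ← Matrix.mul_assoc Z.1 W.1, trace_mul_cycle]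
    · have hZ' : Z.1 * x - x * Z.1 = 0 := congrArg Subtype.val hZ
      exact sub_eq_zero.1 hZ'
  refine le_antisymm (Submodule.map_le_iff_le_comap.2 hmaps) fun Z hZ => ?_
  obtain ⟨W, hW⟩ := hsurj ⟨Z, hZ⟩
  exact ⟨W, W.2, congrArg Subtype.val hW⟩

theorem finrank_soCentralizer_add_finrank_soCentralizer_blockProj_add_finrank_soBlock_le
    {x : Matrix (Fin n) (Fin n) K} (hx : x ∈ soBlock K n n)
    (hdisj : soCentralizer n x ⊓ soCentralizer m (blockProj m x) = ⊥) :
    finrank K (soCentralizer n x) + finrank K (soCentralizer m (blockProj m x)) +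
      finrank K (soBlock K n m) ≤ finrank K (soBlock K n n) := by
  have hker : ∀ Z ∈ soBlock K n m, Z * x = x * Z → Z = 0 := fun Z hZ hZx => by
    have hg : Z ∈ soCentralizer n x := mem_soCentralizer.2 ⟨hZ.1, blockProj_self Z, hZx⟩
    have hk : Z ∈ soCentralizer m (blockProj m x) := mem_soCentralizer.2 ⟨hZ.1, hZ.2, by
      rw [← blockProj_mul_of_left hZ.2, hZx, blockProj_mul_of_right hZ.2]⟩
    simpa [hdisj] using Submodule.mem_inf.2 ⟨hg, hk⟩
  have hle : soCentralizer n x ⊔ soCentralizer m (blockProj m x) ≤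
      LinearMap.ker (adProj m x) ⊓ soBlock K n n := by
    refine sup_le (fun Z hZ => ?_) (fun Z hZ => ?_) <;>
      obtain ⟨hskew, hblock, hcomm⟩ := mem_soCentralizer.1 hZ
    · refine ⟨LinearMap.mem_ker.2 ?_, hskew, hblock⟩
      rw [adProj_apply, hcomm, sub_self, blockProj_zero]
    · refine ⟨LinearMap.mem_ker.2 ?_, soBlock_le_soBlock_self ⟨hskew, hblock⟩⟩
      rw [adProj_apply, blockProj_sub, blockProj_mul_of_right hblock,
        blockProj_mul_of_left hblock, hcomm, sub_self]
  have hsum := Submodule.finrank_sup_add_finrank_inf_eq (soCentralizer n x)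
    (soCentralizer m (blockProj m x))
  rw [hdisj, finrank_bot, add_zero] at hsum
  have hrank := (adProj m x).finrank_map_add_finrank_ker_inf (soBlock K n n)
  rw [map_adProj_soBlock hx.1 hker] at hrank
  have := Submodule.finrank_mono hle
  omega

theorem finrank_soBlock_le_finrank_soBlock_pred_add {last : Fin n} (hlast : (last : ℕ) = n - 1) :
    finrank K (soBlock K n n) ≤ finrank K (soBlock K n (n - 1)) + (n - 1) := by
  let col : Matrix (Fin n) (Fin n) K →ₗ[K] Fin n → K :=
    { toFun := fun W i => W i last, map_add' := fun _ _ => rfl, map_smul' := fun _ _ => rfl }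
  have hker : LinearMap.ker col ⊓ soBlock K n n ≤ soBlock K n (n - 1) := by
    rintro W ⟨hW, hskew, -⟩
    refine ⟨hskew, (blockProj_pred_eq_iff hlast).2 fun i => ⟨congrFun hW i, ?_⟩⟩
    rw [← neg_eq_zero, ← neg_apply, ← hskew, transpose_apply]
    exact congrFun hW i
  have hrange : (soBlock K n n).map col ≠ ⊤ := by
    intro htop
    obtain ⟨W, hW, hWe⟩ := (Submodule.eq_top_iff'.1 htop) (Pi.single last 1)
    have hdiag : W last last = -W last last := congrFun (congrFun hW.1 last) last
    have hone : W last last = 1 := (congrFun hWe last).trans (Pi.single_eq_same last 1)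
    rw [hone] at hdiag
    norm_num at hdiag
  have hrank := col.finrank_map_add_finrank_ker_inf (soBlock K n n)
  have := Submodule.finrank_lt hrange
  have := Submodule.finrank_mono hker
  rw [Module.finrank_fin_fun] at *
  omega

end UpperBound

end SkewBlock

open SkewBlock

theorem stmt6_general (n : ℕ)
    (x : Matrix (Fin n) (Fin n) ℂ) (hx : xᵀ = -x)
    (last : Fin n) (hlast : (last : ℕ) = n - 1)
    (xk : Matrix (Fin n) (Fin n) ℂ)
    (hxk : ∀ i j, xk i j = if i = last ∨ j = last then 0 else x i j)
    (hzero : ∀ Z : Matrix (Fin n) (Fin n) ℂ,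
      Zᵀ = -Z → (∀ i, Z i last = 0 ∧ Z last i = 0) →
      Z * xk = xk * Z → Z * x = x * Z → Z = 0) :
    Module.finrank ℂ (Submodule.span ℂ
        {Z : Matrix (Fin n) (Fin n) ℂ | Zᵀ = -Z ∧ Z * x = x * Z}) = n / 2
    ∧ Module.finrank ℂ (Submodule.span ℂ
        {Z : Matrix (Fin n) (Fin n) ℂ |
          Zᵀ = -Z ∧ (∀ i, Z i last = 0 ∧ Z last i = 0) ∧ Z * xk = xk * Z})
      = (n - 1) / 2 := by
  have hxk' : xk = blockProj (n - 1) x := by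
    ext i j
    rw [hxk, blockProj_pred_apply hlast]
  have hg : {Z : Matrix (Fin n) (Fin n) ℂ | Zᵀ = -Z ∧ Z * x = x * Z} = soCentralizer n x := by
    ext Z
    simp [mem_soCentralizer, blockProj_self]
  have hk : {Z : Matrix (Fin n) (Fin n) ℂ |
      Zᵀ = -Z ∧ (∀ i, Z i last = 0 ∧ Z last i = 0) ∧ Z * xk = xk * Z} =
        soCentralizer (n - 1) xk := by
    ext Z
    simp [mem_soCentralizer, blockProj_pred_eq_iff hlast]
  have hdisj : soCentralizer n x ⊓ soCentralizer (n - 1) xk = ⊥ := by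
    refine eq_bot_iff.2 fun Z ⟨hZg, hZk⟩ => ?_
    obtain ⟨hskew, -, hZx⟩ := mem_soCentralizer.1 hZg
    obtain ⟨-, hZk, hZxk⟩ := mem_soCentralizer.1 hZk
    exact hzero Z hskew ((blockProj_pred_eq_iff hlast).1 hZk) hZxk hZx
  have hxg : x ∈ soBlock ℂ n n := ⟨hx, blockProj_self x⟩
  rw [hg, hk, Submodule.span_eq, Submodule.span_eq, hxk']
  rw [hxk'] at hdisj
  have hupper :=
    finrank_soCentralizer_add_finrank_soCentralizer_blockProj_add_finrank_soBlock_le hxg hdisj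
  have hdim := finrank_soBlock_le_finrank_soBlock_pred_add (K := ℂ) hlast
  have hlow := half_le_finrank_soCentralizer le_rfl hxg
  have hlow' := half_le_finrank_soCentralizer (Nat.sub_le n 1) (blockProj_mem_soBlock hx)
  omega

/-- For `g = so(n, ℂ)` (skew-symmetric matrices) and `k = so(n-1, ℂ)` (those with last row
and column zero), if `x ∈ g` satisfies `z_k(x_k) ∩ z_g(x) = 0` — where `x_k` is the
orthogonal projection of `x` to `k` — then `x` is regular in `g` and `x_k` is regular in
`k`: `dim z_g(x) = ⌊n/2⌋` and `dim z_k(x_k) = ⌊(n-1)/2⌋`. -/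
theorem stmt6 (n : ℕ) (hn : 3 ≤ n)
    (x : Matrix (Fin n) (Fin n) ℂ) (hx : xᵀ = -x)
    (last : Fin n) (hlast : (last : ℕ) = n - 1)
    (xk : Matrix (Fin n) (Fin n) ℂ)
    (hxk : ∀ i j, xk i j = if i = last ∨ j = last then 0 else x i j)
    (hzero : ∀ Z : Matrix (Fin n) (Fin n) ℂ,
      Zᵀ = -Z → (∀ i, Z i last = 0 ∧ Z last i = 0) →
      Z * xk = xk * Z → Z * x = x * Z → Z = 0) :
    Module.finrank ℂ (Submodule.span ℂ
        {Z : Matrix (Fin n) (Fin n) ℂ | Zᵀ = -Z ∧ Z * x = x * Z}) = n / 2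
    ∧ Module.finrank ℂ (Submodule.span ℂ
        {Z : Matrix (Fin n) (Fin n) ℂ |
          Zᵀ = -Z ∧ (∀ i, Z i last = 0 ∧ Z last i = 0) ∧ Z * xk = xk * Z})
      = (n - 1) / 2 :=
  stmt6_general n x hx last hlast xk hxk hzero
end

section
/- Let g = so(n, ℂ) and k = so(n−1, ℂ) = g^θ. If x ∈ g satisfies σ(x_k) ∩ σ(x) = ∅ (disjoint spectra in the sense below), then z_k(x) = 0, i.e. no nonzero element of k commutes with x. -/
/-! If `Z ∈ k` is nonzero and commutes with `x`, its range `U` is an `x`-stable subspace of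
dimension at least two (a nonzero skew-symmetric matrix has rank `≥ 2`) contained in `ℂ^{n-1}`,
where `x` and `x_k` act compatibly. Generalized eigenspaces of `x|_U` therefore embed into those
of both `x` and `x_k`. Either `x|_U` has a nonzero eigenvalue, which is then common to `x` and
`x_k`, or `x|_U` is nilpotent and `0` is an eigenvalue of multiplicity `≥ dim U ≥ 2` of both;
in either case `σ(x_k) ∩ σ(x) ≠ ∅`. -/

open Matrix

/-- The spectrum of `y ∈ so(m, ℂ)` in the sense of the paper: all eigenvalues, except that
for `m` odd the forced eigenvalue `0` is only counted if its algebraic multiplicity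
is strictly greater than one. -/
def specSo (m : ℕ) (y : Matrix (Fin m) (Fin m) ℂ) : Set ℂ :=
  {μ | μ ∈ spectrum ℂ y ∧ (μ = 0 → Odd m → 1 < (Matrix.charpoly y).rootMultiplicity 0)}

open Module Polynomial

theorem Matrix.two_le_rank_of_transpose_eq_neg {K n : Type*} [Field K] [NeZero (2 : K)]
    [Fintype n] [DecidableEq n] {Z : Matrix n n K} (hZ : Zᵀ = -Z) (hZ0 : Z ≠ 0) :
    2 ≤ Z.rank := by
  have hskew (i j : n) : Z j i = -Z i j := by simpa using congrFun (congrFun hZ i) j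
  have hdiag (i : n) : Z i i = 0 := by
    have h2 : (2 : K) * Z i i = 0 := by linear_combination hskew i i
    exact (mul_eq_zero.mp h2).resolve_left two_ne_zero
  obtain ⟨a, c, hac⟩ : ∃ a c, Z a c ≠ 0 := by
    by_contra! h
    exact hZ0 (Matrix.ext h)
  have hli : LinearIndependent K ![Z.col c, Z.col a] := by
    refine LinearIndependent.pair_iff.mpr fun s t hst => ?_
    have ha := congrFun hst a
    have hc := congrFun hst c
    simp only [Pi.add_apply, Pi.smul_apply, col_apply, hdiag, smul_eq_mul, mul_zero, add_zero,
      zero_add, Pi.zero_apply, hskew a c] at ha hc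
    exact ⟨(mul_eq_zero.mp ha).resolve_right hac,
      (mul_eq_zero.mp hc).resolve_right (neg_ne_zero.mpr hac)⟩
  calc 2 = finrank K (Submodule.span K (Set.range ![Z.col c, Z.col a])) := by
        rw [finrank_span_eq_card hli, Fintype.card_fin]
    _ ≤ Z.rank := by
        refine Submodule.finrank_mono (Submodule.span_le.mpr (Set.range_subset_iff.mpr ?_))
        simp only [Fin.forall_fin_two, ← mulVec_single_one]
        exact ⟨⟨_, rfl⟩, ⟨_, rfl⟩⟩

theorem Matrix.submatrix_mulVec_comp {R m n : Type*} [NonUnitalNonAssocSemiring R]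
    [Fintype m] [Fintype n] (A : Matrix n n R) {e : m → n} (he : Function.Injective e)
    {v : n → R} (hv : ∀ i ∉ Set.range e, v i = 0) :
    A.submatrix e e *ᵥ (v ∘ e) = (A *ᵥ v) ∘ e := by
  ext i
  exact Fintype.sum_of_injective e he _ _ (fun j hj => by simp [hv j hj]) fun _ => rfl

theorem Polynomial.exists_isRoot_ne_zero_or_rootMultiplicity_zero_eq_natDegree
    {K : Type*} [Field K] [IsAlgClosed K] (p : K[X]) :
    (∃ μ, μ ≠ 0 ∧ p.IsRoot μ) ∨ p.rootMultiplicity 0 = p.natDegree := by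
  classical
  refine or_iff_not_imp_left.mpr fun h => ?_
  rw [← count_roots, ← IsAlgClosed.card_roots_eq_natDegree, Multiset.count_eq_card]
  intro μ hμ
  by_contra hne
  exact h ⟨μ, Ne.symm hne, isRoot_of_mem_roots hμ⟩

section Intertwining

variable {K U V : Type*} [Field K] [AddCommGroup U] [Module K U] [AddCommGroup V] [Module K V]
  {g : Module.End K U} {f : Module.End K V} {e : U →ₗ[K] V}

theorem Module.End.mapsTo_maxGenEigenspace_of_comp_eq (h : f ∘ₗ e = e ∘ₗ g) (μ : K) :
    Set.MapsTo e (g.maxGenEigenspace μ) (f.maxGenEigenspace μ) := by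
  intro v hv
  obtain ⟨k, hk⟩ := (mem_maxGenEigenspace g μ v).mp hv
  refine (mem_maxGenEigenspace f μ (e v)).mpr ⟨k, ?_⟩
  have hμ : (f - μ • 1) ∘ₗ e = e ∘ₗ (g - μ • 1) := by
    rw [LinearMap.sub_comp, LinearMap.comp_sub, h, LinearMap.smul_comp, LinearMap.comp_smul]
    rfl
  have := congr($(Module.End.commute_pow_left_of_commute hμ k) v)
  simpa [hk] using this

theorem LinearMap.rootMultiplicity_charpoly_le_of_comp_eq [FiniteDimensional K U]
    [FiniteDimensional K V] (he : Function.Injective e) (h : f ∘ₗ e = e ∘ₗ g) (μ : K) :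
    g.charpoly.rootMultiplicity μ ≤ f.charpoly.rootMultiplicity μ := by
  rw [← finrank_maxGenEigenspace_eq, ← finrank_maxGenEigenspace_eq]
  exact LinearMap.finrank_le_finrank_of_injective
    (f := e.restrict (Module.End.mapsTo_maxGenEigenspace_of_comp_eq h μ))
    fun u w huw => Subtype.ext (he congr(($huw : V)))

end Intertwining

theorem mem_specSo_of_rootMultiplicity {m : ℕ} {A : Matrix (Fin m) (Fin m) ℂ} {μ : ℂ}
    (hpos : 0 < A.charpoly.rootMultiplicity μ)
    (hzero : μ = 0 → 1 < A.charpoly.rootMultiplicity 0) : μ ∈ specSo m A :=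
  ⟨Matrix.mem_spectrum_iff_isRoot_charpoly.mpr
    ((rootMultiplicity_pos (Matrix.charpoly_monic A).ne_zero).mp hpos),
    fun hμ _ => hzero hμ⟩

theorem specSo_inter_nonempty_of_comp_eq {U : Type*} [AddCommGroup U] [Module ℂ U]
    [FiniteDimensional ℂ U] (g : Module.End ℂ U) (hU : 2 ≤ finrank ℂ U) {m n : ℕ}
    (A : Matrix (Fin n) (Fin n) ℂ) (eA : U →ₗ[ℂ] Fin n → ℂ) (heA : Function.Injective eA)
    (hA : A.mulVecLin ∘ₗ eA = eA ∘ₗ g)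
    (B : Matrix (Fin m) (Fin m) ℂ) (eB : U →ₗ[ℂ] Fin m → ℂ) (heB : Function.Injective eB)
    (hB : B.mulVecLin ∘ₗ eB = eB ∘ₗ g) :
    (specSo m B ∩ specSo n A).Nonempty := by
  have hdeg := g.charpoly_natDegree
  obtain ⟨μ, hμpos, hμzero⟩ : ∃ μ, 0 < g.charpoly.rootMultiplicity μ ∧
      (μ = 0 → 1 < g.charpoly.rootMultiplicity 0) := by
    rcases g.charpoly.exists_isRoot_ne_zero_or_rootMultiplicity_zero_eq_natDegree with
      ⟨μ, hμ0, hμ⟩ | h0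
    · exact ⟨μ, (rootMultiplicity_pos g.charpoly_monic.ne_zero).mpr hμ, fun h => absurd h hμ0⟩
    -- otherwise `g` is nilpotent, so `0` has multiplicity `finrank U ≥ 2`
    · exact ⟨0, by omega, fun _ => by omega⟩
  have transfer {k : ℕ} (C : Matrix (Fin k) (Fin k) ℂ) (eC : U →ₗ[ℂ] Fin k → ℂ)
      (heC : Function.Injective eC) (hC : C.mulVecLin ∘ₗ eC = eC ∘ₗ g) : μ ∈ specSo k C := by
    have hle := LinearMap.rootMultiplicity_charpoly_le_of_comp_eq heC hC
    rw [Matrix.charpoly_mulVecLin] at hle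
    exact mem_specSo_of_rootMultiplicity (hμpos.trans_le (hle μ))
      fun h => (hμzero h).trans_le (hle 0)
  exact ⟨μ, transfer B eB heB hB, transfer A eA heA hA⟩

theorem specSo_submatrix_inter_nonempty_of_commute {m n : ℕ} (A : Matrix (Fin n) (Fin n) ℂ)
    {e : Fin m → Fin n} (he : Function.Injective e) {Z : Matrix (Fin n) (Fin n) ℂ}
    (hZ : 2 ≤ Z.rank) (hZA : Z * A = A * Z) (hZe : ∀ i ∉ Set.range e, ∀ j, Z i j = 0) :
    (specSo m (A.submatrix e e) ∩ specSo n A).Nonempty := by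
  let U := LinearMap.range Z.mulVecLin
  have hUe : ∀ v ∈ U, ∀ i ∉ Set.range e, v i = 0 := by
    rintro _ ⟨u, rfl⟩ i hi
    simp [mulVec, dotProduct, hZe i hi]
  have hUA : ∀ v ∈ U, A.mulVecLin v ∈ U := by
    rintro _ ⟨u, rfl⟩
    exact ⟨A *ᵥ u, by simp [mulVec_mulVec, hZA]⟩
  refine specSo_inter_nonempty_of_comp_eq (A.mulVecLin.restrict hUA) hZ A U.subtype
    U.injective_subtype (by ext; rfl) _ (LinearMap.funLeft ℂ ℂ e ∘ₗ U.subtype) ?_ ?_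
  · rintro ⟨v, hv⟩ ⟨w, hw⟩ hvw
    refine Subtype.ext (funext fun i => ?_)
    by_cases hi : i ∈ Set.range e
    · obtain ⟨j, rfl⟩ := hi
      exact congrFun hvw j
    · exact (hUe v hv i hi).trans (hUe w hw i hi).symm
  · ext ⟨v, hv⟩ : 1
    exact Matrix.submatrix_mulVec_comp A he (hUe v hv)

/-- If `x ∈ so(n, ℂ)` and its projection `x_k ∈ so(n-1, ℂ)` have disjoint spectra (in the
sense of `specSo`), then no nonzero element of `k = so(n-1, ℂ)` commutes with `x`,
i.e. `z_k(x) = 0`. -/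
theorem stmt7 (n : ℕ)
    (x : Matrix (Fin n) (Fin n) ℂ)
    (last : Fin n) (hlast : (last : ℕ) = n - 1)
    (xk : Matrix (Fin (n - 1)) (Fin (n - 1)) ℂ)
    (hxk : ∀ i j : Fin (n - 1),
      xk i j = x ⟨i, by have := i.2; omega⟩ ⟨j, by have := j.2; omega⟩)
    (hdisj : specSo (n - 1) xk ∩ specSo n x = ∅) :
    ∀ Z : Matrix (Fin n) (Fin n) ℂ,
      Zᵀ = -Z → (∀ i, Z i last = 0 ∧ Z last i = 0) → Z * x = x * Z → Z = 0 := by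
  intro Z hZ hZlast hZx
  by_contra hZ0
  let e : Fin (n - 1) → Fin n := fun i => ⟨i, by omega⟩
  have he : Function.Injective e := fun i j h => Fin.ext congr(($h : ℕ))
  have hxk' : xk = x.submatrix e e := Matrix.ext hxk
  have hZe : ∀ i ∉ Set.range e, ∀ j, Z i j = 0 := by
    intro i hi j
    obtain rfl : i = last := Fin.ext (by_contra fun h => hi ⟨⟨i, by omega⟩, rfl⟩)
    exact (hZlast j).2
  rw [hxk'] at hdisj
  exact (specSo_submatrix_inter_nonempty_of_commute x he
    (Matrix.two_le_rank_of_transpose_eq_neg hZ hZ0) hZx hZe).ne_empty hdisj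
end

section
/- Let (M, H) be a pair where M is a complex reductive group and H a reductive subgroup, such that H acts on the flag variety of M with finitely many orbits (spherical pair), and suppose dim B = dim h^⊥ − dim(h^⊥ // H), where B is the flag variety of m, h^⊥ the coisotropy representation of H, and h^⊥ // H the GIT quotient. Then every H-regular element of h^⊥ is a regular element of m; conversely, if every H-regular element of h^⊥ is M-regular in m, the dimension identity holds. -/
/-!
For `x ∈ h^⊥` the tangent space `[h, x]` of the orbit `H·x` lies again in `h^⊥` (invariance of
the form), so `dim (H·x) ≤ dim h^⊥`, and Panyushev's codimension identity then says
`dim (H·x) = dim h^⊥ - q` for every `H`-regular `x`. The identity to prove thus reads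
`dim B = dim (H·x)` for `H`-regular `x`. Given it, `2 dim B = 2 dim (H·x) ≤ dim (M·x) ≤ 2 dim B`
makes `x` `M`-regular; conversely, a generic `H`-regular `x` with `dim (M·x) = 2 dim (H·x)` is
`M`-regular, whence `2 dim B = 2 dim (H·x)`.
-/

open Module

theorem Submodule.finrank_map_add_finrank_span_setOf_mem_apply_eq_zero {K V W : Type*}
    [DivisionRing K] [AddCommGroup V] [Module K V] [AddCommGroup W] [Module K W]
    (f : V →ₗ[K] W) (S : Submodule K V) [FiniteDimensional K S] :
    finrank K (S.map f) + finrank K (span K {v | v ∈ S ∧ f v = 0}) = finrank K S := by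
  have hspan : span K {v | v ∈ S ∧ f v = 0} = S ⊓ LinearMap.ker f :=
    span_eq (S ⊓ LinearMap.ker f)
  rw [hspan, ← (f.domRestrict S).finrank_range_add_finrank_ker, LinearMap.range_domRestrict,
    LinearMap.ker_domRestrict, ← map_comap_subtype, finrank_map_subtype_eq]

theorem forall_apply_le_apply_iff_eq {α β : Type*} [PartialOrder β] {f : α → β} {m : β}
    (hle : ∀ y, f y ≤ m) (hattained : ∃ y, f y = m) (x : α) :
    (∀ y, f y ≤ f x) ↔ f x = m := by
  obtain ⟨y, rfl⟩ := hattained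
  exact ⟨fun h => le_antisymm (hle x) (h y), fun h z => h ▸ hle z⟩

section Lie

variable {K L : Type*} [Field K] [LieRing L] [LieAlgebra K L]

theorem LinearMap.BilinForm.lie_mem_orthogonal {B : LinearMap.BilinForm K L}
    (hinv : ∀ x y z : L, B ⁅x, y⁆ z = B x ⁅y, z⁆) {H : LieSubalgebra K L} {z x : L}
    (hz : z ∈ H) (hx : x ∈ B.orthogonal H.toSubmodule) :
    ⁅z, x⁆ ∈ B.orthogonal H.toSubmodule := by
  rw [LinearMap.BilinForm.mem_orthogonal_iff] at hx ⊢
  intro w hw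
  rw [← hinv]
  exact hx _ (H.lie_mem hw hz)

theorem LieSubalgebra.finrank_sub_finrank_centralizer_le_finrank_orthogonal [Module.Finite K L]
    {B : LinearMap.BilinForm K L} (hinv : ∀ x y z : L, B ⁅x, y⁆ z = B x ⁅y, z⁆)
    (H : LieSubalgebra K L) {x : L} (hx : x ∈ B.orthogonal H.toSubmodule) :
    finrank K H - finrank K (Submodule.span K {z : L | z ∈ H ∧ ⁅z, x⁆ = 0}) ≤
      finrank K (B.orthogonal H.toSubmodule) := by
  let adx : L →ₗ[K] L := (LieModule.toEnd K L L : L →ₗ[K] Module.End K L).flip x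
  have hrank : finrank K (H.toSubmodule.map adx) +
      finrank K (Submodule.span K {z : L | z ∈ H ∧ ⁅z, x⁆ = 0}) = finrank K H :=
    H.toSubmodule.finrank_map_add_finrank_span_setOf_mem_apply_eq_zero adx
  have himage : H.toSubmodule.map adx ≤ B.orthogonal H.toSubmodule := by
    rintro _ ⟨z, hz, rfl⟩
    exact B.lie_mem_orthogonal hinv hz hx
  have := Submodule.finrank_mono himage
  omega

end Lie

theorem stmt9_general (L : Type*) [LieRing L] [LieAlgebra ℂ L] [Module.Finite ℂ L]
    (B : LinearMap.BilinForm ℂ L)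
    (hinv : ∀ x y z : L, B ⁅x, y⁆ z = B x ⁅y, z⁆)
    (H : LieSubalgebra ℂ L)
    (P : Submodule ℂ L) (hP : ∀ x : L, x ∈ P ↔ ∀ z ∈ H, B z x = 0)
    (orbH orbM : L → ℕ)
    (horbH : ∀ x : L, orbH x = Module.finrank ℂ H -
        Module.finrank ℂ (Submodule.span ℂ {z : L | z ∈ H ∧ ⁅z, x⁆ = 0}))
    (Hreg Mreg : L → Prop)
    (hHreg : ∀ x : L, Hreg x ↔ x ∈ P ∧ ∀ y ∈ P, orbH y ≤ orbH x)
    (hMreg : ∀ x : L, Mreg x ↔ ∀ y : L, orbM y ≤ orbM x)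
    (dB q : ℕ)
    (hdBmax : ∀ y : L, orbM y ≤ 2 * dB) (hdBatt : ∃ y : L, orbM y = 2 * dB)
    (hq : ∀ x : L, Hreg x → Module.finrank ℂ P - orbH x = q)
    (hineq : ∀ x ∈ P, 2 * orbH x ≤ orbM x)
    (hgen : ∃ x : L, Hreg x ∧ orbM x = 2 * orbH x) :
    dB = Module.finrank ℂ P - q ↔ ∀ x : L, Hreg x → Mreg x := by
  have hP_eq : P = B.orthogonal H.toSubmodule := by
    ext x
    rw [hP, LinearMap.BilinForm.mem_orthogonal_iff]
    rfl
  have orbH_le (x : L) (hx : x ∈ P) : orbH x ≤ finrank ℂ P := by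
    subst hP_eq
    exact horbH x ▸ H.finrank_sub_finrank_centralizer_le_finrank_orthogonal hinv hx
  have Mreg_iff (x : L) : Mreg x ↔ orbM x = 2 * dB :=
    (hMreg x).trans (forall_apply_le_apply_iff_eq hdBmax hdBatt x)
  obtain ⟨x₀, hx₀, hx₀M⟩ := hgen
  obtain ⟨hx₀P, hx₀max⟩ := (hHreg x₀).1 hx₀
  have orbH_eq (x : L) (hx : Hreg x) : orbH x = orbH x₀ :=
    le_antisymm (hx₀max x ((hHreg x).1 hx).1) (((hHreg x).1 hx).2 x₀ hx₀P)
  have hdB_iff : dB = finrank ℂ P - q ↔ dB = orbH x₀ := by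
    have := orbH_le x₀ hx₀P
    have := hq x₀ hx₀
    omega
  rw [hdB_iff]
  constructor
  · rintro rfl x hx
    rw [Mreg_iff]
    exact le_antisymm (hdBmax x) (orbH_eq x hx ▸ hineq x ((hHreg x).1 hx).1)
  · intro hall
    have := (Mreg_iff x₀).1 (hall x₀ hx₀)
    omega

/-- Abstract form of Theorem 4.3: for a reductive spherical pair `(M, H)` with Lie algebras
`(L, H)`, coisotropy representation `h^⊥ = P`, orbit dimensions `orbH x = dim h - dim z_h(x)`
and `orbM x = dim m - dim z_m(x)`, `q = dim (h^⊥ // H)` and `dB = dim B` (so `2·dB` is the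
maximal adjoint orbit dimension), and granting Panyushev's facts (the codimension of the
`H`-orbit of any `H`-regular point is `q`; `2·dim(H·x) ≤ dim(M·x)` on `P`; generically
`dim(M·x) = 2·dim(H·x)`), the identity `dB = dim P - q` holds if and only if every
`H`-regular element of `h^⊥` is `M`-regular. -/
theorem stmt9 (L : Type*) [LieRing L] [LieAlgebra ℂ L] [Module.Finite ℂ L]
    (B : LinearMap.BilinForm ℂ L)
    (hsymm : ∀ x y : L, B x y = B y x)
    (hinv : ∀ x y z : L, B ⁅x, y⁆ z = B x ⁅y, z⁆)
    (hnd : ∀ x : L, (∀ y : L, B x y = 0) → x = 0)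
    (H : LieSubalgebra ℂ L)
    (P : Submodule ℂ L) (hP : ∀ x : L, x ∈ P ↔ ∀ z ∈ H, B z x = 0)
    (orbH orbM : L → ℕ)
    (horbH : ∀ x : L, orbH x = Module.finrank ℂ H -
        Module.finrank ℂ (Submodule.span ℂ {z : L | z ∈ H ∧ ⁅z, x⁆ = 0}))
    (horbM : ∀ x : L, orbM x = Module.finrank ℂ L -
        Module.finrank ℂ (Submodule.span ℂ {z : L | ⁅z, x⁆ = 0}))
    (Hreg Mreg : L → Prop)
    (hHreg : ∀ x : L, Hreg x ↔ x ∈ P ∧ ∀ y ∈ P, orbH y ≤ orbH x)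
    (hMreg : ∀ x : L, Mreg x ↔ ∀ y : L, orbM y ≤ orbM x)
    (dB q : ℕ)
    (hdBmax : ∀ y : L, orbM y ≤ 2 * dB) (hdBatt : ∃ y : L, orbM y = 2 * dB)
    (hq : ∀ x : L, Hreg x → Module.finrank ℂ P - orbH x = q)
    (hineq : ∀ x ∈ P, 2 * orbH x ≤ orbM x)
    (hgen : ∃ x : L, Hreg x ∧ orbM x = 2 * orbH x) :
    dB = Module.finrank ℂ P - q ↔ ∀ x : L, Hreg x → Mreg x :=
  stmt9_general L B hinv H P hP orbH orbM horbH Hreg Mreg hHreg hMreg dB q hdBmax hdBatt hq hineq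
    hgen
end

section
/- Let g = so(n, ℂ), K = SO(n−1, ℂ), and let x ∈ g satisfy z_k(x) = 0 (x is n-strongly regular). Then the stabilizer Z_K(x) = {g ∈ K : Ad(g)x = x} is the trivial group. -/
/-! An element `g ∈ Z_K(x)` is orthogonal and commutes with `x`, hence so does `gᵀ`; then
`g - gᵀ ∈ z_k(x) = 0`, so `g` is a symmetric orthogonal matrix, i.e. an involution, and
`Q = 1 - g` satisfies `Q² = 2Q`. The element `QxQ = 2Qx` lies in `z_k(x)`, so `Qx = xQ = 0`;
consequently `QAQ ∈ z_k(x)` for every skew-symmetric `A`, which forces `Q` to have rank at most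
one. A nonzero such `Q` would make `g` a reflection, of determinant `1 - tr Q = -1`. -/

open Matrix

variable {ι R K : Type*} [Fintype ι]

/-- The centralizer `z_k(x)`, where `k = so(n-1)` sits in `so(n)` as the skew-symmetric matrices
whose `l`-th row and column vanish. -/
def soCentralizer [CommRing R] (l : ι) (x : Matrix ι ι R) : Set (Matrix ι ι R) :=
  {Z | Zᵀ = -Z ∧ (∀ i, Z i l = 0 ∧ Z l i = 0) ∧ Commute Z x}

section CommRing

variable [CommRing R] {l : ι} {x : Matrix ι ι R}

lemma mul_mul_apply_eq_zero {Q : Matrix ι ι R} (hQ : ∀ i, Q i l = 0 ∧ Q l i = 0)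
    (B : Matrix ι ι R) (i : ι) : (Q * B * Q) i l = 0 ∧ (Q * B * Q) l i = 0 := by
  constructor
  · rw [mul_apply]
    exact Finset.sum_eq_zero fun k _ => by rw [(hQ k).1, mul_zero]
  · rw [mul_assoc, mul_apply]
    exact Finset.sum_eq_zero fun k _ => by rw [(hQ k).2, zero_mul]

lemma Commute.transpose_of_transpose_eq_neg {g : Matrix ι ι R} (hx : xᵀ = -x)
    (hgx : Commute g x) : Commute gᵀ x := by
  have h := congrArg transpose hgx.eq
  rw [transpose_mul, transpose_mul, hx, neg_mul, mul_neg, neg_inj] at h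
  exact h.symm

lemma transpose_eq_self_of_commute (hx : xᵀ = -x) (hreg : ∀ Z ∈ soCentralizer l x, Z = 0)
    {g : Matrix ι ι R} (hgl : ∀ i, g i l = g l i) (hgx : Commute g x) : gᵀ = g := by
  refine (sub_eq_zero.mp (hreg (g - gᵀ) ⟨?_, fun i => ?_, ?_⟩)).symm
  · rw [transpose_sub, transpose_transpose, neg_sub]
  · simp [hgl i]
  · exact hgx.sub_left (hgx.transpose_of_transpose_eq_neg hx)

lemma mul_eq_zero_of_mul_self_eq_smul (hx : xᵀ = -x) (hreg : ∀ Z ∈ soCentralizer l x, Z = 0)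
    {Q : Matrix ι ι R} {c : R} (hc : IsUnit c) (hQt : Qᵀ = Q)
    (hQl : ∀ i, Q i l = 0 ∧ Q l i = 0) (hQx : Commute Q x) (hQQ : Q * Q = c • Q) :
    Q * x = 0 := by
  have hQxQ : Q * x * Q = 0 := by
    refine hreg _ ⟨?_, mul_mul_apply_eq_zero hQl x, ?_⟩
    · rw [transpose_mul, transpose_mul, hQt, hx, neg_mul, mul_neg, mul_assoc]
    · change Q * x * Q * x = x * (Q * x * Q)
      rw [mul_assoc, hQx.eq, ← mul_assoc, mul_assoc x, ← hQx.eq, mul_assoc x]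
  rwa [mul_assoc, ← hQx.eq, ← mul_assoc, hQQ, smul_mul_assoc, hc.smul_eq_zero] at hQxQ

lemma mul_mul_eq_zero_of_mul_eq_zero (hreg : ∀ Z ∈ soCentralizer l x, Z = 0)
    {Q : Matrix ι ι R} (hQt : Qᵀ = Q) (hQl : ∀ i, Q i l = 0 ∧ Q l i = 0) (hQx : Commute Q x)
    (hQx0 : Q * x = 0) {A : Matrix ι ι R} (hA : Aᵀ = -A) : Q * A * Q = 0 := by
  refine hreg _ ⟨?_, mul_mul_apply_eq_zero hQl A, ?_⟩
  · rw [transpose_mul, transpose_mul, hQt, hA, neg_mul, mul_neg, mul_assoc]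
  · change Q * A * Q * x = x * (Q * A * Q)
    rw [mul_assoc, hQx0, mul_zero, ← mul_assoc, ← mul_assoc, ← hQx.eq, hQx0, zero_mul, zero_mul]

lemma mul_apply_mul_eq_of_mul_single_sub_mul_eq_zero [DecidableEq ι] {Q : Matrix ι ι R}
    (h : ∀ i j, Q * (single i j 1 - single j i 1) * Q = 0) (a i j b : ι) :
    Q a i * Q j b = Q a j * Q i b := by
  have h := congrFun₂ (h i j) a b
  simpa [mul_sub, sub_mul, mul_apply, single, ite_and, Finset.mul_sum, sub_eq_zero] using h

lemma det_one_sub_vecMulVec [DecidableEq ι] (u v : ι → R) :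
    det (1 - vecMulVec u v) = 1 - v ⬝ᵥ u := by
  rw [vecMulVec_eq Unit, det_one_sub_mul_comm, det_unique]
  simp [mul_apply, dotProduct]

end CommRing

section Field

variable [Field K]

lemma exists_eq_vecMulVec {Q : Matrix ι ι K} (h : ∀ a i j b, Q a i * Q j b = Q a j * Q i b) :
    ∃ u v : ι → K, Q = vecMulVec u v := by
  by_cases hQ : Q = 0
  · exact ⟨0, 0, by simp [hQ]⟩
  obtain ⟨a, i, hai⟩ : ∃ a i, Q a i ≠ 0 := by
    by_contra! h
    exact hQ (Matrix.ext h)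
  refine ⟨fun j => Q a j / Q a i, fun b => Q i b, Matrix.ext fun j b => ?_⟩
  rw [vecMulVec_apply, div_mul_eq_mul_div, eq_div_iff hai, mul_comm, h]

lemma dotProduct_eq_of_vecMulVec_mul_self_eq_smul {u v : ι → K} {c : K}
    (hQ : vecMulVec u v ≠ 0) (hQQ : vecMulVec u v * vecMulVec u v = c • vecMulVec u v) :
    v ⬝ᵥ u = c := by
  rw [vecMulVec_mul_vecMulVec, vecMulVec_smul, ← sub_eq_zero, ← sub_smul, smul_eq_zero] at hQQ
  exact sub_eq_zero.mp (hQQ.resolve_right hQ)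

lemma det_one_sub_eq_of_mul_self_eq_smul [DecidableEq ι] {Q : Matrix ι ι K} {c : K}
    (hrk : ∀ a i j b, Q a i * Q j b = Q a j * Q i b) (hQQ : Q * Q = c • Q) (hQ : Q ≠ 0) :
    det (1 - Q) = 1 - c := by
  obtain ⟨u, v, rfl⟩ := exists_eq_vecMulVec hrk
  rw [det_one_sub_vecMulVec, dotProduct_eq_of_vecMulVec_mul_self_eq_smul hQ hQQ]

end Field

theorem stmt10_general (n : ℕ)
    (x : Matrix (Fin n) (Fin n) ℂ) (hx : xᵀ = -x)
    (last : Fin n)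
    (hnsreg : ∀ Z : Matrix (Fin n) (Fin n) ℂ,
      Zᵀ = -Z → (∀ i, Z i last = 0 ∧ Z last i = 0) → Z * x = x * Z → Z = 0) :
    ∀ g : Matrix (Fin n) (Fin n) ℂ,
      gᵀ * g = 1 → g.det = 1 →
      (∀ i, g i last = (if i = last then 1 else 0) ∧
            g last i = (if i = last then 1 else 0)) →
      g * x = x * g → g = 1 := by
  intro g hg hdet hgl hgx
  have hreg : ∀ Z ∈ soCentralizer last x, Z = 0 := fun Z ⟨hZ, hZl, hZx⟩ => hnsreg Z hZ hZl hZx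
  have hgt : gᵀ = g :=
    transpose_eq_self_of_commute hx hreg (fun i => by rw [(hgl i).1, (hgl i).2]) hgx
  set Q := 1 - g
  have hQt : Qᵀ = Q := by rw [transpose_sub, transpose_one, hgt]
  have hQl : ∀ i, Q i last = 0 ∧ Q last i = 0 := fun i => by
    simp [Q, one_apply, (hgl i).1, (hgl i).2, eq_comm]
  have hQx : Commute Q x := (Commute.one_left x).sub_left hgx
  have hQQ : Q * Q = (2 : ℂ) • Q := by
    have hgg : g * g = 1 := by rwa [hgt] at hg
    have hexp : Q * Q = 1 - g - g + g * g := by simp only [Q]; noncomm_ring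
    rw [hexp, hgg, two_smul]
    simp only [Q]
    abel
  have hQx0 := mul_eq_zero_of_mul_self_eq_smul hx hreg (isUnit_iff_ne_zero.mpr two_ne_zero)
    hQt hQl hQx hQQ
  have hrk := mul_apply_mul_eq_of_mul_single_sub_mul_eq_zero fun i j =>
    mul_mul_eq_zero_of_mul_eq_zero hreg hQt hQl hQx hQx0
      (by rw [transpose_sub, transpose_single, transpose_single, neg_sub])
  by_contra hg1
  have hdetQ := det_one_sub_eq_of_mul_self_eq_smul hrk hQQ (sub_ne_zero.mpr (Ne.symm hg1))
  rw [sub_sub_cancel, hdet] at hdetQ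
  norm_num at hdetQ

/-- Let `g = so(n, ℂ)` (skew-symmetric matrices), `K = SO(n-1, ℂ) ⊆ SO(n, ℂ)` (special
orthogonal matrices fixing the last basis vector).  If `x ∈ g` is `n`-strongly regular,
i.e. `z_k(x) = 0`, then the stabilizer `Z_K(x)` is trivial. -/
theorem stmt10 (n : ℕ) (hn : 3 ≤ n)
    (x : Matrix (Fin n) (Fin n) ℂ) (hx : xᵀ = -x)
    (last : Fin n) (hlast : (last : ℕ) = n - 1)
    (hnsreg : ∀ Z : Matrix (Fin n) (Fin n) ℂ,
      Zᵀ = -Z → (∀ i, Z i last = 0 ∧ Z last i = 0) → Z * x = x * Z → Z = 0) :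
    ∀ g : Matrix (Fin n) (Fin n) ℂ,
      gᵀ * g = 1 → g.det = 1 →
      (∀ i, g i last = (if i = last then 1 else 0) ∧
            g last i = (if i = last then 1 else 0)) →
      g * x = x * g → g = 1 :=
  stmt10_general n x hx last hnsreg
end

section
/- Let g = so(n, ℂ) with n > 3 and let Φₙ : g → ℂ^{r_{n−1}} × ℂ^{rₙ} be the partial Kostant–Wallach map given by the fundamental adjoint invariants of k = so(n−1, ℂ) evaluated at x_k together with those of g evaluated at x. Then the nilfibre Φₙ^{−1}(0) contains no element x with z_k(x_k) ∩ z_g(x) = 0. That is, every x ∈ g with x and x_k both nilpotent and all invariants vanishing satisfies z_k(x_k) ∩ z_g(x) ≠ 0. -/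
/-!
Write `x = u + v eᵀ - e vᵀ`, where `u = x_k` is `x` with its last row and column zeroed, `e` is
the last basis vector and `v` the last column of `x`. Since `x` is nilpotent, `1 - t x` is
invertible for every `t`; the vector `y = e + t (1 - t u)⁻¹ v` satisfies
`(1 - t x) y = (1 + t² Σ (v ⬝ uⁱ v) tⁱ) e` and `e ⬝ y = 1`, so this polynomial has no root and,
`ℂ` being algebraically closed, all `v ⬝ uⁱ v` vanish.

Any `Z = a ∧ b` with `a, b ⊥ e, v`, `u a = 0` and `u b ∈ ℂ a` commutes with `u` and with `x`.
If some `b ⊥ e` with `v ⊥ uʲ b` for all `j` is not killed by `u`, the top `uᵏ⁺¹ b, uᵏ b` of its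
`u`-string is such a pair; by the first step this applies to `b = v` unless `u v = 0`. Otherwise
`u v = 0`, so `u` kills `{e, v}ᗮ`, which has dimension at least `n - 2 ≥ 2`.
-/

namespace Matrix

section CommRing

variable {R ι : Type*} [CommRing R]

section ZeroRowCol

variable [DecidableEq ι]

def zeroRowCol (l : ι) (x : Matrix ι ι R) : Matrix ι ι R :=
  of fun i j => if i = l ∨ j = l then 0 else x i j

variable {l : ι} {x : Matrix ι ι R}

lemma transpose_zeroRowCol : (zeroRowCol l x)ᵀ = zeroRowCol l xᵀ := by
  ext i j
  simp [zeroRowCol, or_comm]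

lemma zeroRowCol_neg : zeroRowCol l (-x) = -zeroRowCol l x := by
  ext i j
  simp only [zeroRowCol, of_apply, neg_apply]
  split_ifs <;> simp

lemma eq_zeroRowCol_add_vecMulVec_sub_vecMulVec (hx : xᵀ = -x) (hll : x l l = 0) :
    x = zeroRowCol l x + vecMulVec (fun i => x i l) (Pi.single l 1)
      - vecMulVec (Pi.single l 1) (fun i => x i l) := by
  have hskew : ∀ i j, x j i = -x i j := fun i j => by simpa using congrFun (congrFun hx i) j
  ext i j
  by_cases hi : i = l <;> by_cases hj : j = l <;>
    simp [zeroRowCol, vecMulVec_apply, hi, hj, hll, hskew l j]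

variable [Fintype ι]

lemma zeroRowCol_mulVec_single : zeroRowCol l x *ᵥ Pi.single l 1 = 0 := by
  ext i
  simp [zeroRowCol]

lemma single_vecMul_zeroRowCol : Pi.single l 1 ᵥ* zeroRowCol l x = 0 := by
  ext j
  simp [zeroRowCol]

end ZeroRowCol

def wedge (a b : ι → R) : Matrix ι ι R := vecMulVec a b - vecMulVec b a

lemma wedge_transpose (a b : ι → R) : (wedge a b)ᵀ = -wedge a b := by
  simp [wedge]

lemma wedge_apply_eq_zero {a b : ι → R} {i : ι} (ha : a i = 0) (hb : b i = 0) (j : ι) :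
    wedge a b j i = 0 ∧ wedge a b i j = 0 := by
  simp [wedge, vecMulVec_apply, ha, hb]

variable [Fintype ι]

lemma wedge_mulVec (a b z : ι → R) : wedge a b *ᵥ z = (b ⬝ᵥ z) • a - (a ⬝ᵥ z) • b := by
  simp [wedge, sub_mulVec, vecMulVec_mulVec]

lemma wedge_ne_zero [Nontrivial R] [DecidableEq ι] {a b : ι → R}
    (h : LinearIndependent R ![a, b]) : wedge a b ≠ 0 := by
  intro h0
  have hb : b = 0 := by
    ext i
    have hcol := congrArg (· *ᵥ Pi.single i (1 : R)) h0
    simp only [wedge_mulVec, zero_mulVec, dotProduct_single, mul_one, sub_eq_add_neg,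
      ← neg_smul] at hcol
    exact (LinearIndependent.pair_iff.mp h _ _ hcol).1
  exact h.ne_zero 1 (by simpa using hb)

lemma commute_wedge_vecMulVec {a b p q : ι → R} (hpa : p ⬝ᵥ a = 0) (hpb : p ⬝ᵥ b = 0)
    (hqa : q ⬝ᵥ a = 0) (hqb : q ⬝ᵥ b = 0) : Commute (wedge a b) (vecMulVec p q) := by
  simp only [Commute, SemiconjBy, wedge, sub_mul, mul_sub, vecMulVec_mul_vecMulVec,
    dotProduct_comm a p, dotProduct_comm b p, hpa, hpb, hqa, hqb, zero_smul, vecMulVec_zero,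
    sub_zero]

lemma vecMul_eq_neg_mulVec {u : Matrix ι ι R} (hu : uᵀ = -u) (z : ι → R) :
    z ᵥ* u = -(u *ᵥ z) := by
  rw [← mulVec_transpose, hu, neg_mulVec]

lemma commute_wedge_of_mulVec {u : Matrix ι ι R} (hu : uᵀ = -u) {a b : ι → R} {c : R}
    (ha : u *ᵥ a = 0) (hb : u *ᵥ b = c • a) : Commute (wedge a b) u := by
  simp only [Commute, SemiconjBy, wedge, sub_mul, mul_sub, vecMulVec_mul, mul_vecMulVec,
    vecMul_eq_neg_mulVec hu, ha, hb, neg_zero, vecMulVec_zero, zero_vecMulVec]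
  ext i j
  simp only [sub_apply, zero_apply, vecMulVec_apply, Pi.neg_apply, Pi.smul_apply, smul_eq_mul]
  ring

lemma dotProduct_pow_mulVec_eq_zero [DecidableEq ι] {u : Matrix ι ι R} {w b : ι → R}
    (hw : w ᵥ* u = 0) (hb : w ⬝ᵥ b = 0) (k : ℕ) : w ⬝ᵥ (u ^ k *ᵥ b) = 0 := by
  cases k with
  | zero => simpa using hb
  | succ k => rw [pow_succ', ← mulVec_mulVec, dotProduct_mulVec, hw, zero_dotProduct]

lemma exists_pow_mulVec_ne_zero_and_eq_zero [DecidableEq ι] {u : Matrix ι ι R}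
    (hu : IsNilpotent u) {b : ι → R} (hb : u *ᵥ b ≠ 0) :
    ∃ k, u ^ (k + 1) *ᵥ b ≠ 0 ∧ u ^ (k + 2) *ᵥ b = 0 := by
  classical
  have hex : ∃ N, u ^ (N + 1) *ᵥ b = 0 := by
    obtain ⟨N, hN⟩ := hu
    exact ⟨N, by rw [pow_succ, hN, zero_mul, zero_mulVec]⟩
  have hpos : Nat.find hex ≠ 0 := fun h0 => hb (by simpa [h0] using Nat.find_spec hex)
  obtain ⟨k, hk⟩ := Nat.exists_eq_add_one_of_ne_zero hpos
  refine ⟨k, Nat.find_min hex (by omega), ?_⟩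
  simpa [hk] using Nat.find_spec hex

end CommRing

section Field

variable {K ι : Type*} [Field K] [Fintype ι]

lemma linearIndependent_pair_of_mulVec {u : Matrix ι ι K} {a b : ι → K} (ha : u *ᵥ a = 0)
    (hb : u *ᵥ b = a) (ha0 : a ≠ 0) : LinearIndependent K ![a, b] := by
  refine (LinearIndependent.pair_iff' ha0).mpr fun s hs => ha0 ?_
  rw [← hb, ← hs, mulVec_smul, ha, smul_zero]

lemma exists_linearIndependent_pair_orthogonal (e v : ι → K) (h : 3 < Fintype.card ι) :
    ∃ a b : ι → K, e ⬝ᵥ a = 0 ∧ v ⬝ᵥ a = 0 ∧ e ⬝ᵥ b = 0 ∧ v ⬝ᵥ b = 0 ∧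
      LinearIndependent K ![a, b] := by
  set f := (of ![e, v]).mulVecLin
  have hW : 1 < Module.finrank K (LinearMap.ker f) := by
    have hsum := LinearMap.finrank_range_add_finrank_ker f
    have hrange := Submodule.finrank_le (LinearMap.range f)
    simp only [Module.finrank_pi, Fintype.card_fin] at hsum hrange
    omega
  have : Nontrivial (LinearMap.ker f) := Module.nontrivial_of_finrank_pos (R := K) (by omega)
  obtain ⟨a, ha⟩ := exists_ne (0 : LinearMap.ker f)
  obtain ⟨b, hab⟩ := exists_linearIndependent_pair_of_one_lt_finrank hW ha
  have hmem : ∀ z : LinearMap.ker f, e ⬝ᵥ (z : ι → K) = 0 ∧ v ⬝ᵥ (z : ι → K) = 0 := fun z => by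
    have hz := LinearMap.mem_ker.mp z.2
    exact ⟨congrFun hz 0, congrFun hz 1⟩
  have hcomp : (LinearMap.ker f).subtype ∘ ![a, b] = ![(a : ι → K), b] := by
    ext i
    fin_cases i <;> rfl
  refine ⟨a, b, (hmem a).1, (hmem a).2, (hmem b).1, (hmem b).2, ?_⟩
  simpa only [hcomp] using hab.map' _ (LinearMap.ker f).ker_subtype

variable [DecidableEq ι]

lemma one_add_sq_mul_sum_ne_zero {x u : Matrix ι ι K} {v e : ι → K}
    (hx : x = u + vecMulVec v e - vecMulVec e v) (hxnil : IsNilpotent x) {M : ℕ} (hM : u ^ M = 0)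
    (hue : u *ᵥ e = 0) (heu : e ᵥ* u = 0) (hee : e ⬝ᵥ e = 1) (hev : e ⬝ᵥ v = 0) (t : K) :
    1 + t ^ 2 * ∑ i ∈ Finset.range M, v ⬝ᵥ (u ^ i *ᵥ v) * t ^ i ≠ 0 := by
  set P := ∑ i ∈ Finset.range M, (t • u) ^ i
  have hP : (1 - t • u) * P = 1 := by rw [mul_neg_geom_sum, smul_pow, hM, smul_zero, sub_zero]
  set w := t • (P *ᵥ v)
  have hew : e ⬝ᵥ w = 0 := by
    have heu' : e ᵥ* (t • u) = 0 := by rw [vecMul_smul, heu, smul_zero]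
    simp only [w, P, dotProduct_smul, Matrix.sum_mulVec, dotProduct_sum,
      dotProduct_pow_mulVec_eq_zero heu' hev, Finset.sum_const_zero, smul_zero]
  have hvw : t * (v ⬝ᵥ w) = t ^ 2 * ∑ i ∈ Finset.range M, v ⬝ᵥ (u ^ i *ᵥ v) * t ^ i := by
    simp only [w, P, dotProduct_smul, Matrix.sum_mulVec, dotProduct_sum, smul_pow, smul_mulVec,
      smul_eq_mul, Finset.mul_sum]
    exact Finset.sum_congr rfl fun i _ => by ring
  have hw : w - t • (u *ᵥ w) = t • v :=
    calc w - t • (u *ᵥ w) = (1 - t • u) *ᵥ w := by rw [sub_mulVec, one_mulVec, smul_mulVec]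
      _ = t • (((1 - t • u) * P) *ᵥ v) := by rw [mulVec_smul, mulVec_mulVec]
      _ = t • v := by rw [hP, one_mulVec]
  set y := e + w
  have hy : (1 - t • x) *ᵥ y = (1 + t * (v ⬝ᵥ w)) • e := by
    rw [hx, sub_mulVec, one_mulVec, smul_mulVec, sub_mulVec, add_mulVec, vecMulVec_mulVec,
      vecMulVec_mulVec]
    have huy : u *ᵥ y = u *ᵥ w := by rw [mulVec_add, hue, zero_add]
    have hey : e ⬝ᵥ y = 1 := by rw [dotProduct_add, hee, hew, add_zero]
    have hvy : v ⬝ᵥ y = v ⬝ᵥ w := by rw [dotProduct_add, dotProduct_comm, hev, zero_add]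
    rw [huy, hey, hvy, op_smul_eq_smul, op_smul_eq_smul, one_smul]
    linear_combination (norm := module) hw
  intro h0
  have hy0 : y = 0 := by
    refine mulVec_injective_of_isUnit (hxnil.smul t).isUnit_one_sub ?_
    rw [hy, hvw, h0, zero_smul, mulVec_zero]
  have : e ⬝ᵥ y = 1 := by rw [dotProduct_add, hee, hew, add_zero]
  simp [hy0] at this

open Polynomial in
lemma dotProduct_pow_mulVec_self_eq_zero [IsAlgClosed K] {x u : Matrix ι ι K} {v e : ι → K}
    (hx : x = u + vecMulVec v e - vecMulVec e v) (hxnil : IsNilpotent x) (hunil : IsNilpotent u)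
    (hue : u *ᵥ e = 0) (heu : e ᵥ* u = 0) (hee : e ⬝ᵥ e = 1) (hev : e ⬝ᵥ v = 0) (k : ℕ) :
    v ⬝ᵥ (u ^ k *ᵥ v) = 0 := by
  obtain ⟨M, hM⟩ := hunil
  by_cases hkM : M ≤ k
  · rw [pow_eq_zero_of_le hkM hM, zero_mulVec, dotProduct_zero]
  set S : K[X] := ∑ i ∈ Finset.range M, C (v ⬝ᵥ (u ^ i *ᵥ v)) * X ^ i
  have hdeg : (1 + X ^ 2 * S).degree = 0 := by
    by_contra hdeg
    obtain ⟨t, ht⟩ := IsAlgClosed.exists_root _ hdeg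
    exact one_add_sq_mul_sum_ne_zero hx hxnil hM hue heu hee hev t
      (by simpa [S, eval_finsetSum] using ht)
  have hcoeff := coeff_eq_zero_of_degree_lt (p := 1 + X ^ 2 * S) (n := k + 2)
    (by rw [hdeg]; exact_mod_cast Nat.succ_pos _)
  simpa [S, coeff_X_pow_mul', finsetSum_coeff, coeff_C_mul_X_pow, coeff_one, not_le.mp hkM]
    using hcoeff

lemma exists_orthogonal_pair_mulVec_eq_smul {u : Matrix ι ι K} {v e : ι → K}
    (hu : uᵀ = -u) (hunil : IsNilpotent u) (heu : e ᵥ* u = 0) (hev : e ⬝ᵥ v = 0)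
    (hiso : ∀ k, v ⬝ᵥ (u ^ k *ᵥ v) = 0) (hcard : 3 < Fintype.card ι) :
    ∃ a b : ι → K, ∃ c : K, e ⬝ᵥ a = 0 ∧ v ⬝ᵥ a = 0 ∧ e ⬝ᵥ b = 0 ∧ v ⬝ᵥ b = 0 ∧
      u *ᵥ a = 0 ∧ u *ᵥ b = c • a ∧ LinearIndependent K ![a, b] := by
  by_cases hstring : ∃ b, e ⬝ᵥ b = 0 ∧ (∀ j, v ⬝ᵥ (u ^ j *ᵥ b) = 0) ∧ u *ᵥ b ≠ 0
  · obtain ⟨b, heb, hvb, hub⟩ := hstring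
    obtain ⟨k, hk, hk'⟩ := exists_pow_mulVec_ne_zero_and_eq_zero hunil hub
    have hua : u *ᵥ (u ^ (k + 1) *ᵥ b) = 0 := by rw [mulVec_mulVec, ← pow_succ']; exact hk'
    have hub' : u *ᵥ (u ^ k *ᵥ b) = u ^ (k + 1) *ᵥ b := by rw [mulVec_mulVec, ← pow_succ']
    exact ⟨_, _, 1, dotProduct_pow_mulVec_eq_zero heu heb _, hvb _,
      dotProduct_pow_mulVec_eq_zero heu heb _, hvb _, hua, by rw [one_smul, hub'],
      linearIndependent_pair_of_mulVec hua hub' hk⟩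
  push Not at hstring
  have huv : u *ᵥ v = 0 := hstring v hev hiso
  have hvu : v ᵥ* u = 0 := by rw [vecMul_eq_neg_mulVec hu, huv, neg_zero]
  have hker : ∀ z, e ⬝ᵥ z = 0 → v ⬝ᵥ z = 0 → u *ᵥ z = 0 := fun z hez hvz =>
    hstring z hez (dotProduct_pow_mulVec_eq_zero hvu hvz)
  obtain ⟨a, b, hea, hva, heb, hvb, hab⟩ := exists_linearIndependent_pair_orthogonal e v hcard
  exact ⟨a, b, 0, hea, hva, heb, hvb, hker a hea hva, by rw [zero_smul]; exact hker b heb hvb, hab⟩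

end Field

end Matrix

open Matrix

theorem stmt15_general (n : ℕ) (hn : 3 < n)
    (x : Matrix (Fin n) (Fin n) ℂ) (hx : xᵀ = -x)
    (last : Fin n)
    (xk : Matrix (Fin n) (Fin n) ℂ)
    (hxk : ∀ i j, xk i j = if i = last ∨ j = last then 0 else x i j)
    (hnilx : IsNilpotent x) (hnilxk : IsNilpotent xk) :
    ∃ Z : Matrix (Fin n) (Fin n) ℂ, Z ≠ 0 ∧ Zᵀ = -Z ∧
      (∀ i, Z i last = 0 ∧ Z last i = 0) ∧ Z * xk = xk * Z ∧ Z * x = x * Z := by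
  obtain rfl : xk = zeroRowCol last x := ext hxk
  set u := zeroRowCol last x
  set v : Fin n → ℂ := fun i => x i last
  set e : Fin n → ℂ := Pi.single last 1
  have hll : x last last = 0 := self_eq_neg.mp (by simpa using congrFun (congrFun hx last) last)
  have hu : uᵀ = -u := by rw [transpose_zeroRowCol, hx, zeroRowCol_neg]
  have hdec := eq_zeroRowCol_add_vecMulVec_sub_vecMulVec hx hll
  have hev : e ⬝ᵥ v = 0 := by simpa [e, v] using hll
  have hiso := dotProduct_pow_mulVec_self_eq_zero hdec hnilx hnilxk zeroRowCol_mulVec_single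
    single_vecMul_zeroRowCol (by simp) hev
  obtain ⟨a, b, c, hea, hva, heb, hvb, hua, hub, hab⟩ :=
    exists_orthogonal_pair_mulVec_eq_smul hu hnilxk single_vecMul_zeroRowCol hev hiso
      (by simpa using hn)
  have hZu := commute_wedge_of_mulVec hu hua hub
  have hZx := (hZu.add_right (commute_wedge_vecMulVec hva hvb hea heb)).sub_right
    (commute_wedge_vecMulVec hea heb hva hvb)
  rw [← hdec] at hZx
  refine ⟨wedge a b, wedge_ne_zero hab, wedge_transpose a b,
    wedge_apply_eq_zero (by simpa [e] using hea) (by simpa [e] using heb), hZu, hZx⟩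

/-- For `g = so(n, ℂ)` with `n > 3`, the nilfibre of the partial Kostant–Wallach map
contains no `n`-strongly regular elements: every `x ∈ g` with `x` and its projection
`x_k` to `k = so(n-1, ℂ)` both nilpotent (i.e. all invariants vanishing) satisfies
`z_k(x_k) ∩ z_g(x) ≠ 0`. -/
theorem stmt15 (n : ℕ) (hn : 3 < n)
    (x : Matrix (Fin n) (Fin n) ℂ) (hx : xᵀ = -x)
    (last : Fin n) (hlast : (last : ℕ) = n - 1)
    (xk : Matrix (Fin n) (Fin n) ℂ)
    (hxk : ∀ i j, xk i j = if i = last ∨ j = last then 0 else x i j)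
    (hnilx : IsNilpotent x) (hnilxk : IsNilpotent xk) :
    ∃ Z : Matrix (Fin n) (Fin n) ℂ, Z ≠ 0 ∧ Zᵀ = -Z ∧
      (∀ i, Z i last = 0 ∧ Z last i = 0) ∧ Z * xk = xk * Z ∧ Z * x = x * Z :=
  stmt15_general n hn x hx last xk hxk hnilx hnilxk
end

section
/- Let g = so(n, ℂ) with n > 3. There is no subvariety X ⊆ g such that the restriction of the Kostant–Wallach map Φ : g → ℂ^{r₂} × ⋯ × ℂ^{rₙ} to X is an isomorphism of varieties onto ℂ^{r₂} × ⋯ × ℂ^{rₙ}. -/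
open Matrix

/-- The Pfaffian of a skew-symmetric matrix (sum over permutations normalized by
`2^{m/2} (m/2)!`). -/
noncomputable def pfGen (m : ℕ) (A : Matrix (Fin m) (Fin m) ℂ) : ℂ :=
  (1 / ((2 : ℂ) ^ (m / 2) * (Nat.factorial (m / 2)))) *
    ∑ σ : Equiv.Perm (Fin m), ((Equiv.Perm.sign σ : ℤ) : ℂ) *
      ∏ i : Fin (m / 2),
        A (σ ⟨2 * (i : ℕ), by have := i.2; omega⟩) (σ ⟨2 * (i : ℕ) + 1, by have := i.2; omega⟩)

/-- The projection `x ↦ xᵢ` of `x ∈ so(n, ℂ)` onto `so(i, ℂ)` (upper-left `i × i` block). -/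
def subMat (n : ℕ) (x : Matrix (Fin n) (Fin n) ℂ) (i : ℕ) (h : i ≤ n) :
    Matrix (Fin i) (Fin i) ℂ :=
  Matrix.of fun a b => x ⟨(a : ℕ), by have := a.2; omega⟩ ⟨(b : ℕ), by have := b.2; omega⟩

/-- Index set for the Gelfand–Zeitlin functions: pairs `(i, j)` with `2 ≤ i ≤ n` and
`1 ≤ j ≤ ⌊i/2⌋` (encoded with `j` zero-based; for `i < 2` the fibre is empty). -/
def GZidx (n : ℕ) := Σ i : Fin (n + 1), Fin ((i : ℕ) / 2)

instance (n : ℕ) : Fintype (GZidx n) := by unfold GZidx; infer_instance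

/-- The Gelfand–Zeitlin function `f_{i,j}(x) = ψ_{i,j}(xᵢ)`: traces of even powers of the
projection `xᵢ`, with the last invariant replaced by the Pfaffian when `i` is even. -/
noncomputable def GZfun (n : ℕ) (p : GZidx n) (x : Matrix (Fin n) (Fin n) ℂ) : ℂ :=
  if (p.1 : ℕ) % 2 = 0 ∧ (p.2 : ℕ) + 1 = (p.1 : ℕ) / 2 then
    pfGen (p.1 : ℕ) (subMat n x (p.1 : ℕ) (by have := p.1.2; omega))
  else
    Matrix.trace ((subMat n x (p.1 : ℕ) (by have := p.1.2; omega)) ^ (2 * ((p.2 : ℕ) + 1)))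

attribute [local instance] Matrix.normedAddCommGroup Matrix.normedSpace

/-!
Suppose `f` is a differentiable section of `Φ` with skew-symmetric values, and put `x = f 0`, a
point of the nilfibre `Φ⁻¹(0)`. Differentiating `Φ ∘ f = id` shows that the differentials at `x`
of the Gelfand–Zeitlin functions, restricted to `so(n)`, are linearly independent. Already the
functions of the upper-left block `x₄ = (aᵢⱼ)` rule this out. Since `f₃₁`, `f₄₁` and `f₄₂` are
quadratic forms, their differentials are their polar forms. On the nilfibre either `x₃ = 0`, so
that `d f₃₁` vanishes, or `a₀₂ ≠ 0`; then the equations of the fibre force `a₂₃ = 0` and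
`a₀₂ a₀₃ + a₁₂ a₁₃ = 0`, and `a₀₂ a₁₂ · d f₄₁` becomes a combination of `d f₃₁` and `d f₄₂`.
-/

open Equiv

theorem HasFDerivAt.comp_eq_of_comp_eq {𝕜 E F G : Type*} [NontriviallyNormedField 𝕜]
    [NormedAddCommGroup E] [NormedSpace 𝕜 E] [NormedAddCommGroup F] [NormedSpace 𝕜 F]
    [NormedAddCommGroup G] [NormedSpace 𝕜 G] {φ : F → G} {φ' : F →L[𝕜] G} {g : E → F}
    {g' : E →L[𝕜] F} {ℓ : E →L[𝕜] G} {c : E} (hφ : HasFDerivAt φ φ' (g c))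
    (hg : HasFDerivAt g g' c) (h : ∀ y, φ (g y) = ℓ y) : φ' ∘L g' = ℓ :=
  (hφ.comp c hg).unique (by simpa [Function.comp_def, h] using ℓ.hasFDerivAt)

theorem HasFDerivAt.transpose_eq_neg {𝕜 E ι : Type*} [NontriviallyNormedField 𝕜]
    [CompleteSpace 𝕜] [NormedAddCommGroup E] [NormedSpace 𝕜 E] [Fintype ι]
    {g : E → Matrix ι ι 𝕜} {g' : E →L[𝕜] Matrix ι ι 𝕜} {c : E} (hg : HasFDerivAt g g' c)
    (hskew : ∀ y, (g y)ᵀ = -g y) (v : E) : (g' v)ᵀ = -g' v := by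
  let T : Matrix ι ι 𝕜 →L[𝕜] Matrix ι ι 𝕜 := LinearMap.toContinuousLinearMap
    ((transposeLinearEquiv ι ι 𝕜 𝕜).toLinearMap + LinearMap.id)
  have hT : T ∘L g' = 0 :=
    T.hasFDerivAt.comp_eq_of_comp_eq (ℓ := 0) hg fun y => by simp [T, hskew]
  exact eq_neg_of_add_eq_zero_left (by simpa [T] using congrArg (· v) hT)

open QuadraticMap in
theorem QuadraticMap.hasFDerivAt {𝕜 E F : Type*} [RCLike 𝕜] [NormedAddCommGroup E]
    [NormedSpace 𝕜 E] [FiniteDimensional 𝕜 E] [NormedAddCommGroup F] [NormedSpace 𝕜 F]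
    (Q : QuadraticMap 𝕜 E F) (x : E) :
    HasFDerivAt Q (LinearMap.toContinuousLinearMap (polarBilin Q x)) x := by
  let B : E →L[𝕜] E →L[𝕜] F := LinearMap.toContinuousLinearMap
    (LinearMap.toContinuousLinearMap.toLinearMap ∘ₗ polarBilin Q)
  have half_add_half (v : F) : (2 : 𝕜)⁻¹ • v + (2 : 𝕜)⁻¹ • v = v := by
    rw [← add_smul]; norm_num
  have hQ : ⇑Q = fun y => (2 : 𝕜)⁻¹ • B y y := by
    ext y
    simp [B, polar_self, two_smul, half_add_half]
  rw [hQ]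
  refine ((B.hasFDerivAt_of_bilinear (hasFDerivAt_id x) (hasFDerivAt_id x)).const_smul
    (2 : 𝕜)⁻¹).congr_fderiv ?_
  ext w
  simp [B, polar_comm Q w x, half_add_half]

@[simps]
def subMatLinearMap (n i : ℕ) (h : i ≤ n) :
    Matrix (Fin n) (Fin n) ℂ →ₗ[ℂ] Matrix (Fin i) (Fin i) ℂ where
  toFun x := subMat n x i h
  map_add' _ _ := rfl
  map_smul' _ _ := rfl

theorem transpose_subMat_eq_neg {n : ℕ} {x : Matrix (Fin n) (Fin n) ℂ} (hx : xᵀ = -x) (i : ℕ)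
    (h : i ≤ n) : (subMat n x i h)ᵀ = -subMat n x i h := by
  show subMat n xᵀ i h = _
  rw [hx]
  rfl

def GZidx.castLE {m n : ℕ} (h : m ≤ n) (p : GZidx m) : GZidx n :=
  ⟨Fin.castLE (by omega) p.1, p.2⟩

theorem GZidx.castLE_injective {m n : ℕ} (h : m ≤ n) : Function.Injective (GZidx.castLE h) := by
  rintro ⟨i, j⟩ ⟨i', j'⟩ hij
  obtain ⟨hi, hj⟩ := Sigma.mk.inj_iff.mp hij
  obtain rfl := Fin.castLE_injective _ hi
  obtain rfl := eq_of_heq hj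
  rfl

theorem GZfun_castLE {m n : ℕ} (h : m ≤ n) (p : GZidx m) (x : Matrix (Fin n) (Fin n) ℂ) :
    GZfun n (p.castLE h) x = GZfun m p (subMat n x m h) := rfl

/- The indices of the Gelfand–Zeitlin functions `f₂₁ = pf x₂`, `f₃₁ = tr x₃²`, `f₄₁ = tr x₄²`
and `f₄₂ = pf x₄` of `so(4)`; the second index is one-based, as in the paper. -/
def gz21 : GZidx 4 := ⟨2, ⟨0, by decide⟩⟩
def gz31 : GZidx 4 := ⟨3, ⟨0, by decide⟩⟩
def gz41 : GZidx 4 := ⟨4, ⟨0, by decide⟩⟩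
def gz42 : GZidx 4 := ⟨4, ⟨1, by decide⟩⟩

theorem gz31_ne_gz41 : gz31 ≠ gz41 := fun h =>
  absurd (congrArg (fun p : GZidx 4 => (p.1 : ℕ)) h) (by decide)

theorem gz42_ne_gz41 : gz42 ≠ gz41 := fun h =>
  absurd (congrArg (fun p : GZidx 4 => (p.2 : ℕ)) h) (by decide)

theorem Matrix.trace_sq_eq_sum {ι R : Type*} [Fintype ι] [DecidableEq ι] [Semiring R]
    (A : Matrix ι ι R) : (A ^ 2).trace = ∑ k, ∑ l, A k l * A l k := by
  simp [trace, pow_two, mul_apply]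

theorem pfGen_two (A : Matrix (Fin 2) (Fin 2) ℂ) : pfGen 2 A = (A 0 1 - A 1 0) / 2 := by
  rw [pfGen, show (1 : Fin 2) = Fin.succ 0 from rfl]
  simp [← Perm.decomposeFin.symm.sum_comp, Fintype.sum_prod_type, Fin.sum_univ_succ,
    Perm.decomposeFin.symm_sign, Perm.decomposeFin_symm_apply_zero]
  ring

theorem pfGen_four (A : Matrix (Fin 4) (Fin 4) ℂ) :
    pfGen 4 A = (1 / 8) * ∑ σ : Perm (Fin 4), (Perm.sign σ : ℂ) *
      (A (σ 0) (σ 1) * A (σ 2) (σ 3)) := by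
  simp [pfGen, Fin.prod_univ_two]
  norm_num

def skewFour (a₀₁ a₀₂ a₀₃ a₁₂ a₁₃ a₂₃ : ℂ) : Matrix (Fin 4) (Fin 4) ℂ :=
  !![0, a₀₁, a₀₂, a₀₃; -a₀₁, 0, a₁₂, a₁₃; -a₀₂, -a₁₂, 0, a₂₃; -a₀₃, -a₁₃, -a₂₃, 0]

theorem exists_eq_skewFour {x : Matrix (Fin 4) (Fin 4) ℂ} (hx : xᵀ = -x) :
    ∃ a₀₁ a₀₂ a₀₃ a₁₂ a₁₃ a₂₃, x = skewFour a₀₁ a₀₂ a₀₃ a₁₂ a₁₃ a₂₃ := by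
  refine ⟨x 0 1, x 0 2, x 0 3, x 1 2, x 1 3, x 2 3, ?_⟩
  have h (i j : Fin 4) : x j i = -x i j := by simpa using congrFun (congrFun hx i) j
  have hd (i : Fin 4) : x i i = 0 := by linear_combination h i i / 2
  ext i j
  fin_cases i <;> fin_cases j <;> simp [skewFour, hd, h 0 1, h 0 2, h 0 3, h 1 2, h 1 3, h 2 3]

theorem skewFour_add (a₀₁ a₀₂ a₀₃ a₁₂ a₁₃ a₂₃ b₀₁ b₀₂ b₀₃ b₁₂ b₁₃ b₂₃ : ℂ) :
    skewFour a₀₁ a₀₂ a₀₃ a₁₂ a₁₃ a₂₃ + skewFour b₀₁ b₀₂ b₀₃ b₁₂ b₁₃ b₂₃ =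
      skewFour (a₀₁ + b₀₁) (a₀₂ + b₀₂) (a₀₃ + b₀₃) (a₁₂ + b₁₂) (a₁₃ + b₁₃) (a₂₃ + b₂₃) := by
  ext i j
  fin_cases i <;> fin_cases j <;> simp [skewFour] <;> ring

section skewFour

variable (a₀₁ a₀₂ a₀₃ a₁₂ a₁₃ a₂₃ : ℂ)

theorem GZfun_gz21_skewFour : GZfun 4 gz21 (skewFour a₀₁ a₀₂ a₀₃ a₁₂ a₁₃ a₂₃) = a₀₁ := by
  show pfGen 2 (subMat 4 _ 2 _) = _
  simp [pfGen_two, subMat, skewFour]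

theorem GZfun_gz31_skewFour :
    GZfun 4 gz31 (skewFour a₀₁ a₀₂ a₀₃ a₁₂ a₁₃ a₂₃) = -2 * (a₀₁ ^ 2 + a₀₂ ^ 2 + a₁₂ ^ 2) := by
  show trace (subMat 4 _ 3 _ ^ 2) = _
  rw [trace_sq_eq_sum]
  simp [Fin.sum_univ_three, subMat, skewFour]
  ring

theorem GZfun_gz41_skewFour :
    GZfun 4 gz41 (skewFour a₀₁ a₀₂ a₀₃ a₁₂ a₁₃ a₂₃) =
      -2 * (a₀₁ ^ 2 + a₀₂ ^ 2 + a₀₃ ^ 2 + a₁₂ ^ 2 + a₁₃ ^ 2 + a₂₃ ^ 2) := by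
  show trace (subMat 4 _ 4 _ ^ 2) = _
  rw [trace_sq_eq_sum]
  simp [Fin.sum_univ_four, subMat, skewFour]
  ring

theorem GZfun_gz42_skewFour :
    GZfun 4 gz42 (skewFour a₀₁ a₀₂ a₀₃ a₁₂ a₁₃ a₂₃) = a₀₁ * a₂₃ - a₀₂ * a₁₃ + a₀₃ * a₁₂ := by
  show pfGen 4 (subMat 4 _ 4 _) = _
  -- in `Fin.succ` form the values of `Perm.decomposeFin.symm` simplify
  rw [pfGen_four, show (1 : Fin 4) = Fin.succ 0 from rfl,
    show (2 : Fin 4) = Fin.succ (Fin.succ 0) from rfl,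
    show (3 : Fin 4) = Fin.succ (Fin.succ (Fin.succ 0)) from rfl]
  simp only [← Perm.decomposeFin.symm.sum_comp, Fintype.sum_prod_type, Fin.sum_univ_succ,
    Perm.decomposeFin.symm_sign, Fintype.sum_unique, Perm.decomposeFin_symm_apply_zero,
    Perm.decomposeFin_symm_apply_succ, swap_apply_right, swap_apply_of_ne_of_ne,
    Fin.succ_ne_zero, ne_eq, Fin.succ_inj, Fin.default_eq_zero, Perm.default_eq, swap_self,
    refl_apply, Perm.sign_one, not_false_eq_true, (Fin.succ_ne_zero _).symm]
  simp [subMat, skewFour]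
  ring

end skewFour

theorem exists_quadraticMap_eq_GZfun {p : GZidx 4} (hp : p = gz31 ∨ p = gz41 ∨ p = gz42) :
    ∃ Q : QuadraticMap ℂ (Matrix (Fin 4) (Fin 4) ℂ) ℂ, ⇑Q = GZfun 4 p := by
  let traceSq (i : ℕ) (h : i ≤ 4) : QuadraticMap ℂ (Matrix (Fin 4) (Fin 4) ℂ) ℂ :=
    (LinearMap.BilinMap.toQuadraticMap ((LinearMap.mul ℂ _).compr₂ (traceLinearMap _ ℂ ℂ))).comp
      (subMatLinearMap 4 i h)
  rcases hp with rfl | rfl | rfl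
  · refine ⟨traceSq 3 (by norm_num), funext fun y => ?_⟩
    show _ = trace (subMat 4 y 3 _ ^ 2)
    simp [traceSq, pow_two]
  · refine ⟨traceSq 4 le_rfl, funext fun y => ?_⟩
    show _ = trace (subMat 4 y 4 _ ^ 2)
    simp [traceSq, pow_two]
  · refine ⟨(1 / 8 : ℂ) • ∑ σ : Perm (Fin 4), (Perm.sign σ : ℂ) • QuadraticMap.linMulLin
      (entryLinearMap ℂ ℂ (σ 0) (σ 1)) (entryLinearMap ℂ ℂ (σ 2) (σ 3)), funext fun y => ?_⟩
    show _ = pfGen 4 (subMat 4 y 4 _)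
    simp [pfGen_four, subMat]

open QuadraticMap in
theorem polar_GZfun_dependent_of_mem_nilfibre {x : Matrix (Fin 4) (Fin 4) ℂ} (hx : xᵀ = -x)
    (h0 : ∀ p, GZfun 4 p x = 0) :
    (∀ w : Matrix (Fin 4) (Fin 4) ℂ, wᵀ = -w → polar (GZfun 4 gz31) x w = 0) ∨
      ∀ w : Matrix (Fin 4) (Fin 4) ℂ, wᵀ = -w → polar (GZfun 4 gz31) x w = 0 →
        polar (GZfun 4 gz42) x w = 0 → polar (GZfun 4 gz41) x w = 0 := by
  obtain ⟨a₀₁, a₀₂, a₀₃, a₁₂, a₁₃, a₂₃, rfl⟩ := exists_eq_skewFour hx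
  have h21 := h0 gz21
  have h31 := h0 gz31
  have h41 := h0 gz41
  have h42 := h0 gz42
  rw [GZfun_gz21_skewFour] at h21
  rw [GZfun_gz31_skewFour] at h31
  rw [GZfun_gz41_skewFour] at h41
  rw [GZfun_gz42_skewFour] at h42
  subst h21
  by_cases h₀₂ : a₀₂ = 0
  · left
    have h₁₂ : a₁₂ = 0 :=
      pow_eq_zero_iff two_ne_zero |>.mp (by linear_combination -h31 / 2 - a₀₂ * h₀₂)
    rintro w hw
    obtain ⟨b₀₁, b₀₂, b₀₃, b₁₂, b₁₃, b₂₃, rfl⟩ := exists_eq_skewFour hw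
    simp only [polar, skewFour_add, GZfun_gz31_skewFour, h₀₂, h₁₂]
    ring
  · right
    have h₁₂ : a₁₂ ≠ 0 := by
      rintro rfl
      exact h₀₂ (pow_eq_zero_iff two_ne_zero |>.mp (by linear_combination -h31 / 2))
    have hsum : a₀₂ * a₀₃ + a₁₂ * a₁₃ = 0 :=
      mul_left_cancel₀ h₀₂ (by linear_combination -a₀₃ * h31 / 2 - a₁₂ * h42)
    have h₂₃ : a₂₃ = 0 := pow_eq_zero_iff two_ne_zero |>.mp <|
      mul_left_cancel₀ (pow_ne_zero 2 h₀₂) (by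
        linear_combination -a₀₂ ^ 2 / 2 * h41 + (a₀₂ ^ 2 + a₀₃ ^ 2) / 2 * h31 +
          (a₀₂ * a₁₃ + a₁₂ * a₀₃) * h42)
    rintro w hw h31' h42'
    obtain ⟨b₀₁, b₀₂, b₀₃, b₁₂, b₁₃, b₂₃, rfl⟩ := exists_eq_skewFour hw
    simp only [polar, skewFour_add, GZfun_gz31_skewFour, GZfun_gz41_skewFour,
      GZfun_gz42_skewFour] at h31' h42' ⊢
    refine mul_left_cancel₀ (mul_ne_zero h₀₂ h₁₂) ?_
    linear_combination (a₀₂ * a₁₂ + a₀₃ * a₁₃) * h31' - 4 * a₀₂ * a₀₃ * h42' +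
      4 * (a₀₃ * b₁₂ - a₀₂ * b₁₃) * hsum + 4 * (a₀₂ * a₀₃ * b₀₁ - a₀₂ * a₁₂ * b₂₃) * h₂₃

theorem polar_GZfun_fderiv_eq {n : ℕ} (h4 : 4 ≤ n)
    {f : (GZidx n → ℂ) → Matrix (Fin n) (Fin n) ℂ} {c : GZidx n → ℂ} (hf : DifferentiableAt ℂ f c)
    (hsec : ∀ y, (fun p => GZfun n p (f y)) = y) (p : GZidx 4)
    (hp : p = gz31 ∨ p = gz41 ∨ p = gz42) (t : GZidx n → ℂ) :
    QuadraticMap.polar (GZfun 4 p) (subMat n (f c) 4 h4) (subMat n (fderiv ℂ f c t) 4 h4) =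
      t (p.castLE h4) := by
  let P := LinearMap.toContinuousLinearMap (subMatLinearMap n 4 h4)
  obtain ⟨Q, hQ⟩ := exists_quadraticMap_eq_GZfun hp
  have := (hQ ▸ Q.hasFDerivAt (P (f c))).comp_eq_of_comp_eq (g := P ∘ f)
    (P.hasFDerivAt.comp c hf.hasFDerivAt)
    (ℓ := ContinuousLinearMap.proj (R := ℂ) (φ := fun _ => ℂ) (p.castLE h4))
    (fun y => (GZfun_castLE h4 p (f y)).symm.trans (congrFun (hsec y) _))
  rw [← hQ]
  exact congrArg (· t) this

/-- For `g = so(n, ℂ)` with `n > 3`, there is no subvariety `X ⊆ g` such that the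
Kostant–Wallach map `Φ` (whose coordinates are the Gelfand–Zeitlin functions) restricts
to an isomorphism of `X` onto `ℂ^{r₂} × ⋯ × ℂ^{rₙ}`: there is no subset `X` of `g`
together with a differentiable (regular) inverse `f` with `Φ ∘ f = id` and
`f ∘ Φ|_X = id`. -/
theorem stmt19 (n : ℕ) (hn : 3 < n) :
    ¬ ∃ (X : Set (Matrix (Fin n) (Fin n) ℂ))
        (f : (GZidx n → ℂ) → Matrix (Fin n) (Fin n) ℂ),
      X ⊆ {x : Matrix (Fin n) (Fin n) ℂ | xᵀ = -x} ∧
      Differentiable ℂ f ∧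
      (∀ x ∈ X, f (fun p => GZfun n p x) = x) ∧
      (∀ c : GZidx n → ℂ, f c ∈ X ∧ (fun p => GZfun n p (f c)) = c) := by
  classical
  rintro ⟨X, f, hX, hf, -, hsec⟩
  have h4 : 4 ≤ n := hn
  have hskew (c : GZidx n → ℂ) : (f c)ᵀ = -f c := hX (hsec c).1
  have hD (t : GZidx n → ℂ) : (subMat n (fderiv ℂ f 0 t) 4 h4)ᵀ = -subMat n (fderiv ℂ f 0 t) 4 h4 :=
    transpose_subMat_eq_neg ((hf 0).hasFDerivAt.transpose_eq_neg hskew t) 4 h4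
  have h0 (p : GZidx 4) : GZfun 4 p (subMat n (f 0) 4 h4) = 0 :=
    (GZfun_castLE h4 p (f 0)).symm.trans (congrFun (hsec 0).2 _)
  have hpolar := polar_GZfun_fderiv_eq h4 (hf 0) (fun c => (hsec c).2)
  let e (q : GZidx 4) : GZidx n → ℂ := Pi.single (q.castLE h4) 1
  have he (q q' : GZidx 4) : e q (q'.castLE h4) = if q' = q then 1 else 0 := by
    simp only [e, Pi.single_apply, (GZidx.castLE_injective h4).eq_iff]
  rcases polar_GZfun_dependent_of_mem_nilfibre (transpose_subMat_eq_neg (hskew 0) 4 h4) h0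
    with hdeg | hdep
  · simpa [hpolar, he] using hdeg _ (hD (e gz31))
  · simpa [hpolar, he, gz31_ne_gz41, gz42_ne_gz41] using hdep _ (hD (e gz41))
end
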